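/- arXiv:math/0510632 — 2 statements merged into one kernel-verified Lean document; each statement's English description precedes it below -/
import Mathlib

section
/- Let R → S, R → T be an almost isomorphism of Markov shifts S and T. Then for every p ≥ 0 the almost isomorphism induces a bijection Γ, modulo somewhere equivalence, from E_p(S) onto E_p(T). In particular, if f ∈ E_p(S,𝒲) for some nonempty collection 𝒲 of S-words, then there is a nonempty collection 𝒱 of T-words such that f∘γ^{−1} ∈ E_p(T,𝒱), where γ is the induced shift-commuting Borel bijection. -/
open MeasureTheory Set Function Filter
open scoped ENNReal NNReal Topology

namespace MarkovAI

variable {V V' : Type}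

/-- The space of bi-infinite paths on the directed graph `(V, E)`. -/
def MSpace (E : V → V → Prop) : Type :=
  {x : ℤ → V // ∀ n : ℤ, E (x n) (x (n + 1))}

instance (E : V → V → Prop) [TopologicalSpace V] : TopologicalSpace (MSpace E) :=
  inferInstanceAs (TopologicalSpace {x : ℤ → V // ∀ n : ℤ, E (x n) (x (n + 1))})

instance (E : V → V → Prop) [MeasurableSpace V] : MeasurableSpace (MSpace E) :=
  inferInstanceAs (MeasurableSpace {x : ℤ → V // ∀ n : ℤ, E (x n) (x (n + 1))})

/-- The left shift map. -/
def mShift (E : V → V → Prop) : MSpace E → MSpace E :=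
  fun x => ⟨fun n => x.1 (n + 1), fun n => x.2 (n + 1)⟩

/-- The word `w` occurs in the point `x` at position `i`. -/
def occursAt (E : V → V → Prop) (w : List V) (x : MSpace E) (i : ℤ) : Prop :=
  ∀ k : Fin w.length, x.1 (i + ((k : ℕ) : ℤ)) = w.get k

/-- An `S`-word: a nonempty finite word occurring in some point of the shift. -/
def IsWord (E : V → V → Prop) (w : List V) : Prop :=
  w ≠ [] ∧ ∃ (x : MSpace E) (i : ℤ), occursAt E w x i

/-- The cylinder `[w]` of points where `w` occurs at position `0`. -/
def cylinder (E : V → V → Prop) (w : List V) : Set (MSpace E) :=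
  {x | occursAt E w x 0}

/-- `S_𝒲` : the set of points seeing words from `𝒲` infinitely often
in the future and in the past. -/
def SWords (E : V → V → Prop) (𝒲 : Set (List V)) : Set (MSpace E) :=
  {x | (∀ N : ℤ, ∃ i : ℤ, N ≤ i ∧ ∃ w ∈ 𝒲, occursAt E w x i) ∧
       (∀ N : ℤ, ∃ i : ℤ, i ≤ N ∧ ∃ w ∈ 𝒲, occursAt E w x i)}

lemma SWords_shift_mem (E : V → V → Prop) (𝒲 : Set (List V)) {x : MSpace E}
    (hx : x ∈ SWords E 𝒲) : mShift E x ∈ SWords E 𝒲 := by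
  obtain ⟨h₁, h₂⟩ := hx
  constructor
  · intro N
    obtain ⟨i, hi, w, hw, hocc⟩ := h₁ (N + 1)
    refine ⟨i - 1, by omega, w, hw, fun k => ?_⟩
    have h := hocc k
    show x.1 (i - 1 + ((k : ℕ) : ℤ) + 1) = w.get k
    rw [show i - 1 + ((k : ℕ) : ℤ) + 1 = i + ((k : ℕ) : ℤ) by ring]
    exact h
  · intro N
    obtain ⟨i, hi, w, hw, hocc⟩ := h₂ (N + 1)
    refine ⟨i - 1, by omega, w, hw, fun k => ?_⟩
    have h := hocc k
    show x.1 (i - 1 + ((k : ℕ) : ℤ) + 1) = w.get k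
    rw [show i - 1 + ((k : ℕ) : ℤ) + 1 = i + ((k : ℕ) : ℤ) by ring]
    exact h

/-- The restriction of the shift to the invariant set `S_𝒲`. -/
def mShiftOn (E : V → V → Prop) (𝒲 : Set (List V)) :
    {x : MSpace E // x ∈ SWords E 𝒲} → {x : MSpace E // x ∈ SWords E 𝒲} :=
  fun x => ⟨mShift E x.1, SWords_shift_mem E 𝒲 x.2⟩

/-- Irreducibility of the directed graph: any vertex leads to any other by a path. -/
def GraphIrreducible (E : V → V → Prop) : Prop :=
  ∀ u v : V, ∃ n : ℕ, 1 ≤ n ∧ ∃ p : ℕ → V, p 0 = u ∧ p n = v ∧ ∀ i < n, E (p i) (p (i + 1))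

/-- Entropy of a countable partition (coded by a map into a countable type). -/
noncomputable def partEnt {X α : Type} [MeasurableSpace X] [Countable α]
    (μ : Measure X) (p : X → α) : ℝ≥0∞ :=
  ∑' a : α, ENNReal.ofReal (Real.negMulLog ((μ (p ⁻¹' {a})).toReal))

/-- Dynamical entropy of a partition under a map, as the infimum of the
entropies of the iterated joins divided by time. -/
noncomputable def entOfPart {X : Type} [MeasurableSpace X] (μ : Measure X) (S : X → X)
    (p : X → ℕ) : ℝ≥0∞ :=
  ⨅ n : ℕ, partEnt μ (fun x => fun i : Fin (n + 1) => p (S^[(i : ℕ)] x)) / ((n : ℝ≥0∞) + 1)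

/-- Measure-theoretic (Kolmogorov–Sinai) entropy: supremum over finite
measurable partitions. -/
noncomputable def mEntropy {X : Type} [MeasurableSpace X] (μ : Measure X) (S : X → X) : ℝ≥0∞ :=
  ⨆ p ∈ {p : X → ℕ | Measurable p ∧ (Set.range p).Finite}, entOfPart μ S p

/-- `μ` is an invariant Borel probability measure for `S`. -/
def InvProb {X : Type} [MeasurableSpace X] (S : X → X) (μ : Measure X) : Prop :=
  IsProbabilityMeasure μ ∧ MeasurePreserving S μ μ

/-- The Gurevič entropy `h(S) = sup_μ h(S,μ)`. -/
noncomputable def gurevic [MeasurableSpace V] (E : V → V → Prop) : ℝ≥0∞ :=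
  ⨆ μ ∈ {μ : Measure (MSpace E) | InvProb (mShift E) μ}, mEntropy μ (mShift E)

/-- Standing assumptions: irreducible countable state Markov shift with
finite Gurevič entropy. -/
def IsMarkovShift [Countable V] [MeasurableSpace V] (E : V → V → Prop) : Prop :=
  GraphIrreducible E ∧ gurevic E ≠ ⊤

/-- `P(S,f,μ) = h_μ(S) + ∫ f dμ`. -/
noncomputable def freeEnergy {X : Type} [MeasurableSpace X] (S : X → X) (f : X → ℝ)
    (μ : Measure X) : ℝ :=
  (mEntropy μ S).toReal + ∫ x, f x ∂μ

/-- `P(S,f,μ)` is well defined: `μ` invariant probability with finite entropy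
and `f` `μ`-integrable. -/
def PDefined {X : Type} [MeasurableSpace X] (S : X → X) (f : X → ℝ) (μ : Measure X) : Prop :=
  InvProb S μ ∧ mEntropy μ S ≠ ⊤ ∧ Integrable f μ

/-- The pressure `P(S,f)`, the supremum of the well-defined `P(S,f,μ)`. -/
noncomputable def pressure {X : Type} [MeasurableSpace X] (S : X → X) (f : X → ℝ) : EReal :=
  sSup {p : EReal | ∃ μ : Measure X, PDefined S f μ ∧ p = (freeEnergy S f μ : EReal)}

/-- An equilibrium measure of `f`: an invariant Borel probability with
`P(S,f,μ) = P(S,f)`. -/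
def IsEquilibrium {X : Type} [MeasurableSpace X] (S : X → X) (f : X → ℝ)
    (μ : Measure X) : Prop :=
  PDefined S f μ ∧ (freeEnergy S f μ : EReal) = pressure S f

/-- Full support: positive on every nonempty open set. -/
def FullSupport {X : Type} [TopologicalSpace X] [MeasurableSpace X] (μ : Measure X) : Prop :=
  ∀ U : Set X, IsOpen U → U.Nonempty → 0 < μ U

/-- `x[-m,-1]` begins with a word from `𝒲`. -/
def beginsWith (E : V → V → Prop) (𝒲 : Set (List V)) (x : MSpace E) (m : ℕ) : Prop :=
  ∃ w ∈ 𝒲, w.length ≤ m ∧ occursAt E w x (-(m : ℤ))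

/-- `x[1,n]` ends with a word from `𝒲`. -/
def endsWith (E : V → V → Prop) (𝒲 : Set (List V)) (x : MSpace E) (n : ℕ) : Prop :=
  ∃ w ∈ 𝒲, w.length ≤ n ∧ occursAt E w x ((n : ℤ) - (w.length : ℤ) + 1)

/-- Eventually `p`-summable variations relative to `𝒲`, for points of `D`
(`D = univ` recovers the class `E_p(S,𝒲)`). -/
def EvVarOn (E : V → V → Prop) (D : Set (MSpace E)) (𝒲 : Set (List V)) (p : ℝ)
    (f : MSpace E → ℝ) : Prop :=
  ∃ ω : ℕ → ℝ, Antitone ω ∧ Summable (fun n : ℕ => (n : ℝ) ^ p * ω n) ∧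
    ∀ x ∈ D, ∀ y ∈ D, ∀ m n : ℕ,
      (∀ i : ℤ, -(m : ℤ) ≤ i → i ≤ (n : ℤ) → x.1 i = y.1 i) →
      beginsWith E 𝒲 x m → endsWith E 𝒲 x n →
      |f x - f y| ≤ ω n + ω m

/-- The class `E_p(S,𝒲)` of eventually `p`-summable variations relative to `𝒲`. -/
def EvVar (E : V → V → Prop) (𝒲 : Set (List V)) (p : ℝ) (f : MSpace E → ℝ) : Prop :=
  EvVarOn E Set.univ 𝒲 p f

/-- `f` depends only on the future coordinates `x_0 x_1 …`. -/
def DependsOnFuture (E : V → V → Prop) (f : MSpace E → ℝ) : Prop :=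
  ∀ x y : MSpace E, (∀ i : ℤ, 0 ≤ i → x.1 i = y.1 i) → f x = f y

/-- Membership in `E_p(S) = ⋃_𝒲 E_p(S,𝒲)`. -/
def MemEp (E : V → V → Prop) (p : ℝ) (f : MSpace E → ℝ) : Prop :=
  ∃ 𝒲 : Set (List V), 𝒲.Nonempty ∧ (∀ w ∈ 𝒲, IsWord E w) ∧ EvVar E 𝒲 p f

/-- The local partition function `Z_n(S,f,W)`. -/
noncomputable def locZ (E : V → V → Prop) (f : MSpace E → ℝ) (W : List V) (n : ℕ) : ℝ≥0∞ :=
  ∑' x : {x : MSpace E // (mShift E)^[n] x = x ∧ occursAt E W x 0},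
    ENNReal.ofReal (Real.exp (∑ k ∈ Finset.range n, f ((mShift E)^[k] x.1)))

/-- Positive recurrence of `(S,f)`: for every nonempty `S`-word `W`,
`Z_n(S,f,W) e^{-nP(S,f)}` is eventually bounded away from `0` and `∞`. -/
def PosRecurrent [MeasurableSpace V] (E : V → V → Prop) (f : MSpace E → ℝ) : Prop :=
  ∀ W : List V, IsWord E W → ∃ n₀ : ℕ, ∃ c C : ℝ, 0 < c ∧ ∀ n : ℕ, n₀ ≤ n →
    ENNReal.ofReal (c * Real.exp ((n : ℝ) * (pressure (mShift E) f).toReal)) ≤ locZ E f W n ∧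
    locZ E f W n ≤ ENNReal.ofReal (C * Real.exp ((n : ℝ) * (pressure (mShift E) f).toReal))

/-- The information function `x ↦ - log E_μ(1_{[x_0]} | S⁻¹ℬ)(x)`,
i.e. `-Σ_a 1_{[a]} log E_μ(1_{[a]}|S⁻¹ℬ)` evaluated at `x`. -/
noncomputable def infoFun [MeasurableSpace V] (E : V → V → Prop)
    (μ : Measure (MSpace E)) (x : MSpace E) : ℝ :=
  - Real.log
      ((μ[Set.indicator {y : MSpace E | y.1 0 = x.1 0} (fun _ => (1 : ℝ)) |
          MeasurableSpace.comap (mShift E) inferInstance]) x)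

/-- A weak equilibrium measure for `(S,f)`. -/
def IsWeakEquilibrium [MeasurableSpace V] (E : V → V → Prop) (f : MSpace E → ℝ)
    (μ : Measure (MSpace E)) : Prop :=
  InvProb (mShift E) μ ∧
  ∃ h : MSpace E → ℝ, Measurable h ∧
    Integrable (fun x => infoFun E μ x + f x + h (mShift E x) - h x) μ ∧
    ((∫ x, (infoFun E μ x + f x + h (mShift E x) - h x) ∂μ : ℝ) : EReal) =
      pressure (mShift E) f

/-- One-block code between Markov shifts. -/
def IsOneBlockCode (E : V → V → Prop) (F : V' → V' → Prop)
    (φ : MSpace E → MSpace F) : Prop :=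
  ∃ Φ : V → V', ∀ (x : MSpace E) (n : ℤ), (φ x).1 n = Φ (x.1 n)

/-- `W` is a magic word for the one-block code `φ`. -/
def IsMagicWord (E : V → V → Prop) (F : V' → V' → Prop) (φ : MSpace E → MSpace F)
    (W : List V') : Prop :=
  IsWord F W ∧
  (∀ y : MSpace F,
      (∀ N : ℤ, ∃ i : ℤ, N ≤ i ∧ occursAt F W y i) →
      (∀ N : ℤ, ∃ i : ℤ, i ≤ N ∧ occursAt F W y i) →
      ∃ x, φ x = y) ∧
  (∃ I : ℤ, ∀ (C : List V') (x x' : MSpace E),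
      occursAt F (W ++ C ++ W) (φ x) 0 → occursAt F (W ++ C ++ W) (φ x') 0 →
      ∀ k : ℕ, k < W.length + C.length → x.1 (I + (k : ℤ)) = x'.1 (I + (k : ℤ)))

/-- An injective one-block code admitting a magic word. -/
def MagicCode (E : V → V → Prop) (F : V' → V' → Prop) (φ : MSpace E → MSpace F) : Prop :=
  IsOneBlockCode E F φ ∧ Function.Injective φ ∧ ∃ W : List V', IsMagicWord E F φ W

/-- Somewhere equivalence of (total representatives of) Borel functions. -/
def SomewhereEq (E : V → V → Prop) (f g : MSpace E → ℝ) : Prop :=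
  ∃ 𝒲 : Set (List V), 𝒲.Nonempty ∧ (∀ w ∈ 𝒲, IsWord E w) ∧
    ∀ x ∈ SWords E 𝒲, f x = g x

/-- Upper bounded real function. -/
def UpperBounded {X : Type} (f : X → ℝ) : Prop := ∃ B : ℝ, ∀ x, f x ≤ B

/-- Bounded real function. -/
def BoundedFn {X : Type} (f : X → ℝ) : Prop := ∃ B : ℝ, ∀ x, |f x| ≤ B

/-- The class `E^{u♭}(S)` of upper bounded, finite-pressure functions of
eventually summable variations whose equilibrium measures charge `𝒲`. -/
def MemEuflat [MeasurableSpace V] (E : V → V → Prop) (f : MSpace E → ℝ) : Prop :=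
  Measurable f ∧ UpperBounded f ∧ pressure (mShift E) f < ⊤ ∧
  ∃ 𝒲 : Set (List V), 𝒲.Nonempty ∧ (∀ w ∈ 𝒲, IsWord E w) ∧
    (EvVar E 𝒲 1 f ∨ (EvVar E 𝒲 0 f ∧ DependsOnFuture E f)) ∧
    ∀ μ : Measure (MSpace E), IsEquilibrium (mShift E) f μ → ∃ w ∈ 𝒲, 0 < μ (cylinder E w)

/-- The class `E^♭(S)` of bounded relatively regular functions. -/
def MemEflat [MeasurableSpace V] (E : V → V → Prop) (f : MSpace E → ℝ) : Prop :=
  Measurable f ∧ BoundedFn f ∧ pressure (mShift E) f < ⊤ ∧ PosRecurrent E f ∧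
  ∃ 𝒲 : Set (List V), 𝒲.Nonempty ∧ (∀ w ∈ 𝒲, IsWord E w) ∧
    (EvVar E 𝒲 1 f ∨ (EvVar E 𝒲 0 f ∧ DependsOnFuture E f)) ∧
    ∀ μ : Measure (MSpace E), IsEquilibrium (mShift E) f μ → Ergodic (mShift E) μ →
      μ (SWords E 𝒲) = 1

/-- Strong positive recurrence of the Markov shift. -/
def SPR [TopologicalSpace V] [MeasurableSpace V] (E : V → V → Prop) : Prop :=
  ∃ μ : Measure (MSpace E), InvProb (mShift E) μ ∧
    mEntropy μ (mShift E) = gurevic E ∧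
    ∀ U : Set (MSpace E), IsOpen U → U.Nonempty →
      ∃ c : ℝ, 0 < c ∧ c < 1 ∧ ∀ᶠ n : ℕ in Filter.atTop,
        μ (Set.univ \ ⋃ k ∈ Finset.range (n + 1), (mShift E)^[k] ⁻¹' U) ≤
          ENNReal.ofReal (c ^ n)

/-- The shift-commuting Borel bijection `γ : K → K'` (with Borel inverse `δ`)
induced by the almost isomorphism `(φ, ψ)`, where `K = S_𝒲` for a suitable
collection of `S`-words. -/
def AICorrespondence {VS VT VR : Type} [MeasurableSpace VS] [MeasurableSpace VT]
    [MeasurableSpace VR]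
    (ES : VS → VS → Prop) (ET : VT → VT → Prop) (ER : VR → VR → Prop)
    (φ : MSpace ER → MSpace ES) (ψ : MSpace ER → MSpace ET)
    (K : Set (MSpace ES)) (K' : Set (MSpace ET))
    (γ : MSpace ES → MSpace ET) (δ : MSpace ET → MSpace ES) : Prop :=
  MeasurableSet K ∧ MeasurableSet K' ∧
  (∃ 𝒲 : Set (List VS), 𝒲.Nonempty ∧ (∀ w ∈ 𝒲, IsWord ES w) ∧ K = SWords ES 𝒲) ∧
  (∃ 𝒱 : Set (List VT), 𝒱.Nonempty ∧ (∀ w ∈ 𝒱, IsWord ET w) ∧ SWords ET 𝒱 ⊆ K') ∧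
  Measurable γ ∧ Measurable δ ∧
  Set.MapsTo γ K K' ∧ Set.MapsTo δ K' K ∧
  (∀ x ∈ K, δ (γ x) = x) ∧ (∀ y ∈ K', γ (δ y) = y) ∧ γ '' K = K' ∧
  (∀ x ∈ K, γ (mShift ES x) = mShift ET (γ x)) ∧
  (∀ y ∈ K', δ (mShift ET y) = mShift ES (δ y)) ∧
  K ⊆ Set.range φ ∧ (∀ r : MSpace ER, φ r ∈ K → γ (φ r) = ψ r)

/-- `g` corresponds to `f` under the almost isomorphism: `g = f ∘ γ⁻¹`
somewhere, i.e. on some `T_𝒱 ⊆ K'`. -/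
def CorrVia {VS VT : Type} (ES : VS → VS → Prop) (ET : VT → VT → Prop)
    (K' : Set (MSpace ET)) (δ : MSpace ET → MSpace ES)
    (f : MSpace ES → ℝ) (g : MSpace ET → ℝ) : Prop :=
  ∃ 𝒱 : Set (List VT), 𝒱.Nonempty ∧ (∀ v ∈ 𝒱, IsWord ET v) ∧ SWords ET 𝒱 ⊆ K' ∧
    ∀ y ∈ SWords ET 𝒱, g y = f (δ y)

/-! ### Auxiliary machinery -/

section Aux

variable {V V' : Type}

lemma occursAt_def' {E : V → V → Prop} {w : List V} {x : MSpace E} {i : ℤ} :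
    occursAt E w x i ↔ ∀ (k : ℕ) (hk : k < w.length), x.1 (i + k) = w[k] := by
  constructor
  · intro h k hk; simpa using h ⟨k, hk⟩
  · intro h k; simpa using h k.1 k.2

/-- Shift of a point by `j` : `(shiftBy j x) n = x (n + j)`. -/
def shiftBy {E : V → V → Prop} (j : ℤ) (x : MSpace E) : MSpace E :=
  ⟨fun n => x.1 (n + j), fun n => by
    have := x.2 (n + j); rwa [show n + j + 1 = n + 1 + j by ring] at this⟩

@[simp] lemma shiftBy_apply {E : V → V → Prop} (j : ℤ) (x : MSpace E) (n : ℤ) :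
    (shiftBy j x).1 n = x.1 (n + j) := rfl

lemma occursAt_shiftBy {E : V → V → Prop} {w : List V} {x : MSpace E} {i j : ℤ} :
    occursAt E w (shiftBy j x) i ↔ occursAt E w x (i + j) := by
  simp only [occursAt_def', shiftBy_apply]
  constructor
  · intro h k hk; have := h k hk; rwa [show i + k + j = i + j + k by ring] at this
  · intro h k hk
    rw [show i + (k : ℤ) + j = i + j + k by ring]
    exact h k hk

/-- The word read off from a point `x` on the window `[i, i+n)`. -/
def sliceWord {E : V → V → Prop} (x : MSpace E) (i : ℤ) (n : ℕ) : List V :=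
  List.ofFn (fun k : Fin n => x.1 (i + k))

@[simp] lemma sliceWord_length {E : V → V → Prop} (x : MSpace E) (i : ℤ) (n : ℕ) :
    (sliceWord x i n).length = n := by simp [sliceWord]

lemma sliceWord_ne_nil {E : V → V → Prop} (x : MSpace E) (i : ℤ) {n : ℕ} (hn : 0 < n) :
    sliceWord x i n ≠ [] := by
  intro h
  have := congrArg List.length h
  simp at this; omega

lemma occursAt_sliceWord_self {E : V → V → Prop} (x : MSpace E) (i : ℤ) (n : ℕ) :
    occursAt E (sliceWord x i n) x i := by
  rw [occursAt_def']
  intro k hk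
  simp only [sliceWord_length] at hk
  simp [sliceWord, List.getElem_ofFn]

lemma eq_of_occursAt_sliceWord {E : V → V → Prop} {y x : MSpace E} {i q : ℤ} {n : ℕ}
    (h : occursAt E (sliceWord y i n) x q) :
    ∀ j : ℤ, 0 ≤ j → j < n → x.1 (q + j) = y.1 (i + j) := by
  intro j hj hjn
  rw [occursAt_def'] at h
  have hb : j.toNat < (sliceWord y i n).length := by simp; omega
  have h2 := h j.toNat hb
  simp only [sliceWord, List.getElem_ofFn] at h2
  rw [show ((j.toNat : ℤ)) = j by omega] at h2
  exact h2

/-- Transfer an occurrence through a shared slice. -/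
lemma occursAt_of_slice {E : V → V → Prop} {y x : MSpace E} {i i' q : ℤ} {n : ℕ}
    {w : List V} (h : occursAt E (sliceWord y i n) x q) (hw : occursAt E w y i')
    (h1 : i ≤ i') (h2 : i' + w.length ≤ i + n) : occursAt E w x (q + (i' - i)) := by
  rw [occursAt_def'] at hw ⊢
  intro k hk
  have hy := hw k hk
  have hx := eq_of_occursAt_sliceWord h (i' - i + k) (by omega) (by omega)
  rw [show q + (i' - i) + k = q + (i' - i + k) by ring, hx,
    show i + (i' - i + k) = i' + k by ring]
  exact hy

/-- Two points sharing an occurrence of the same slice agree on the window. -/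
lemma agree_of_occursAt_sliceWord {E : V → V → Prop} {y x x' : MSpace E} {i q : ℤ} {n : ℕ}
    (h : occursAt E (sliceWord y i n) x q) (h' : occursAt E (sliceWord y i n) x' q) :
    ∀ j : ℤ, q ≤ j → j < q + n → x.1 j = x'.1 j := by
  intro j h1 h2
  have e1 := eq_of_occursAt_sliceWord h (j - q) (by omega) (by omega)
  have e2 := eq_of_occursAt_sliceWord h' (j - q) (by omega) (by omega)
  rw [show q + (j - q) = j by ring] at e1 e2
  rw [e1, e2]

end Aux
section Aux2

variable {V V' : Type}

/-- A nonempty word whose consecutive letters are edges. -/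
def PathWord (E : V → V → Prop) (w : List V) : Prop :=
  w ≠ [] ∧ ∀ (i : ℕ) (h : i + 1 < w.length), E w[i] w[i + 1]

lemma pathWord_of_occursAt {E : V → V → Prop} {w : List V} {x : MSpace E} {i : ℤ}
    (hw : w ≠ []) (h : occursAt E w x i) : PathWord E w := by
  rw [occursAt_def'] at h
  refine ⟨hw, fun k hk => ?_⟩
  have h1 := h k (by omega)
  have h2 := h (k + 1) hk
  have he := x.2 (i + k)
  rw [h1] at he
  rw [show i + (k : ℤ) + 1 = i + ((k : ℕ) + 1 : ℕ) by push_cast; ring] at he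
  rwa [h2] at he

lemma pathWord_sliceWord {E : V → V → Prop} (x : MSpace E) (i : ℤ) {n : ℕ} (hn : 0 < n) :
    PathWord E (sliceWord x i n) :=
  pathWord_of_occursAt (sliceWord_ne_nil x i hn) (occursAt_sliceWord_self x i n)

lemma isWord_of_occursAt {E : V → V → Prop} {w : List V} {x : MSpace E} {i : ℤ}
    (hw : w ≠ []) (h : occursAt E w x i) : IsWord E w :=
  ⟨hw, x, i, h⟩

/-- Concatenation of finite paths. -/
lemma path_concat {E : V → V → Prop} {a b c : V} {m n : ℕ}
    (h1 : ∃ p : ℕ → V, p 0 = a ∧ p m = b ∧ ∀ i < m, E (p i) (p (i + 1)))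
    (h2 : ∃ p : ℕ → V, p 0 = b ∧ p n = c ∧ ∀ i < n, E (p i) (p (i + 1))) :
    ∃ p : ℕ → V, p 0 = a ∧ p (m + n) = c ∧ ∀ i < m + n, E (p i) (p (i + 1)) := by
  obtain ⟨p, hp0, hpm, hpe⟩ := h1
  obtain ⟨q, hq0, hqn, hqe⟩ := h2
  refine ⟨fun i => if i ≤ m then p i else q (i - m), by simp [hp0], ?_, ?_⟩
  · by_cases h : n = 0
    · simp [h, hpm, ← hq0, h ▸ hqn]
    · have : ¬ (m + n ≤ m) := by omega
      simp [this, hqn]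
  · intro i hi
    rcases lt_trichotomy i m with h | h | h
    · have e1 : i ≤ m := by omega
      by_cases h2 : i + 1 ≤ m
      · simpa [e1, h2] using hpe i h
      · have : i + 1 = m := by omega
        simp only [e1, if_pos, this, le_refl]
        simpa [this] using hpe i h
    · subst h
      have hn : 0 < n := by omega
      have : ¬ (i + 1 ≤ i) := by omega
      simp only [le_refl, if_pos, this, if_neg]
      rw [hpm, ← hq0]
      simpa using hqe 0 hn
    · have e1 : ¬ (i ≤ m) := by omega
      have e2 : ¬ (i + 1 ≤ m) := by omega
      have := hqe (i - m) (by omega)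
      rw [show i - m + 1 = i + 1 - m by omega] at this
      simpa [e1, e2] using this

/-- Irreducibility gives arbitrarily long paths. -/
lemma exists_long_path {E : V → V → Prop} (hirr : GraphIrreducible E) (a b : V) (ℓ : ℕ) :
    ∃ n : ℕ, ℓ ≤ n ∧ 1 ≤ n ∧ ∃ p : ℕ → V, p 0 = a ∧ p n = b ∧ ∀ i < n, E (p i) (p (i + 1)) := by
  obtain ⟨n₁, hn₁, hp₁⟩ := hirr a b
  obtain ⟨n₂, hn₂, hp₂⟩ := hirr b b
  have key : ∀ k : ℕ, ∃ p : ℕ → V, p 0 = a ∧ p (n₁ + k * n₂) = b ∧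
      ∀ i < n₁ + k * n₂, E (p i) (p (i + 1)) := by
    intro k
    induction k with
    | zero => simpa using hp₁
    | succ k ih =>
        have := path_concat ih hp₂
        rw [show n₁ + k * n₂ + n₂ = n₁ + (k + 1) * n₂ by ring] at this
        exact this
  exact ⟨n₁ + ℓ * n₂, by nlinarith, by omega, key ℓ⟩

/-- Value of a word as a total function. -/
def wordFn (w : List V) (d : V) : ℕ → V := fun i => if h : i < w.length then w[i] else d

/-- Append a block (path word) to a finite path, with a long connector. -/
lemma append_block {E : V → V → Prop} (hirr : GraphIrreducible E)
    (p : ℕ → V) (n : ℕ) (hp : ∀ i < n, E (p i) (p (i + 1)))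
    (w : List V) (hw : PathWord E w) (ℓ : ℕ) :
    ∃ (q : ℕ → V) (o : ℕ), (∀ i ≤ n, q i = p i) ∧ n + ℓ < o ∧
      (∀ i < o + (w.length - 1), E (q i) (q (i + 1))) ∧
      (∀ (k : ℕ) (hk : k < w.length), q (o + k) = w[k]) := by
  have hwne : 0 < w.length := List.length_pos_iff.2 hw.1
  obtain ⟨t, ht, ht1, c, hc0, hct, hce⟩ := exists_long_path hirr (p n) (w[0]'hwne) (ℓ + 1)
  classical
  refine ⟨fun i => if i ≤ n then p i else if i < n + t then c (i - n)
      else wordFn w (w[0]'hwne) (i - (n + t)), n + t, ?_, by omega, ?_, ?_⟩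
  · intro i hi; simp [hi]
  · intro i hi
    rcases lt_trichotomy i n with h | h | h
    · have e1 : i ≤ n := by omega
      have e2 : i + 1 ≤ n := by omega
      simpa [e1, e2] using hp i h
    · subst h
      have e2 : ¬ (i + 1 ≤ i) := by omega
      by_cases h3 : i + 1 < i + t
      · simp only [le_refl, if_pos, e2, if_neg, h3, if_pos]
        rw [show i + 1 - i = 0 + 1 by omega, ← hc0]
        exact hce 0 (by omega)
      · -- t = 1
        have ht1' : t = 1 := by omega
        have e4 : ¬ (i + 1 < i + t) := by omega
        simp only [le_refl, if_pos, e2, if_neg, e4, if_neg]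
        rw [show i + 1 - (i + t) = 0 by omega]
        have : wordFn w (w[0]'hwne) 0 = c t := by
          rw [hct]; simp [wordFn, hwne]
        rw [this, ← hc0]
        simpa [ht1'] using hce 0 (by omega)
    · have e1 : ¬ (i ≤ n) := by omega
      by_cases h2 : i < n + t
      · have e2 : ¬ (i + 1 ≤ n) := by omega
        by_cases h3 : i + 1 < n + t
        · simp only [e1, if_neg, h2, if_pos, e2, h3]
          have := hce (i - n) (by omega)
          rwa [show i - n + 1 = i + 1 - n by omega] at this
        · have h4 : i + 1 = n + t := by omega
          simp only [e1, if_neg, h2, if_pos, e2, h3]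
          rw [show i + 1 - (n + t) = 0 by omega]
          have hv : wordFn w (w[0]'hwne) 0 = c t := by
            rw [hct]; simp [wordFn, hwne]
          rw [hv, show i - n = t - 1 by omega]
          have := hce (t - 1) (by omega)
          rwa [show t - 1 + 1 = t by omega] at this
      · have e2 : ¬ (i + 1 ≤ n) := by omega
        have e3 : ¬ (i + 1 < n + t) := by omega
        simp only [e1, if_neg, h2, if_neg, e2, e3]
        have hb : i - (n + t) + 1 < w.length := by omega
        have hb2 : i - (n + t) < w.length := by omega
        have := hw.2 (i - (n + t)) hb
        rw [show i + 1 - (n + t) = i - (n + t) + 1 by omega]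
        simpa [wordFn, hb, hb2] using this
  · intro k hk
    have e1 : ¬ (n + t + k ≤ n) := by omega
    have e2 : ¬ (n + t + k < n + t) := by omega
    simp [e1, e2, wordFn, hk]

/-- A bi-infinite periodic point from a loop function. -/
lemma exists_periodic_point_fn {E : V → V → Prop} (P : ℕ → V) (L : ℕ) (hL : 1 ≤ L)
    (hedge : ∀ i < L, E (P i) (P (i + 1))) (hPL : P L = P 0) :
    ∃ x : MSpace E, (∀ (n k : ℤ), x.1 (n + k * L) = x.1 n) ∧
      ∀ j : ℕ, j < L → x.1 (j : ℤ) = P j := by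
  have hL0 : (L : ℤ) ≠ 0 := by omega
  have hLpos : (0 : ℤ) < L := by omega
  have hbd : ∀ n : ℤ, (n % (L:ℤ)).toNat < L := by
    intro n
    have h1 := Int.emod_nonneg n hL0
    have h2 := Int.emod_lt_of_pos n hLpos
    omega
  refine ⟨⟨fun n => P ((n % (L:ℤ)).toNat), ?_⟩, ?_, ?_⟩
  · intro n
    show E (P ((n % (L:ℤ)).toNat)) (P (((n + 1) % (L:ℤ)).toNat))
    set r := (n % (L:ℤ)).toNat with hr
    have h1 := Int.emod_nonneg n hL0
    have h2 := Int.emod_lt_of_pos n hLpos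
    have hnr : n % (L:ℤ) = (r : ℤ) := by omega
    have hmod : (n + 1) % (L:ℤ) = ((r + 1 : ℕ) : ℤ) % (L:ℤ) := by
      conv_lhs => rw [show n + 1 = (r + 1 : ℕ) + (L : ℤ) * (n / L) by
        push_cast; rw [← hnr]; have := Int.mul_ediv_add_emod n L; linarith]
      rw [Int.add_mul_emod_self_left]
    by_cases hc : r + 1 < L
    · have : (n + 1) % (L:ℤ) = ((r + 1 : ℕ) : ℤ) := by
        rw [hmod, Int.emod_eq_of_lt (by positivity) (by exact_mod_cast hc)]
      rw [this]
      simpa using hedge r (by omega)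
    · have hrL : r + 1 = L := by omega
      have : (n + 1) % (L:ℤ) = 0 := by
        rw [hmod, hrL]; simp
      rw [this]
      have := hedge r (by omega)
      rw [hrL, hPL] at this
      simpa using this
  · intro n k
    show P (((n + k * L) % (L:ℤ)).toNat) = P ((n % (L:ℤ)).toNat)
    rw [show n + k * L = n + (L : ℤ) * k by ring, Int.add_mul_emod_self_left]
  · intro j hj
    show P (((j : ℤ) % (L:ℤ)).toNat) = P j
    rw [Int.emod_eq_of_lt (by positivity) (by exact_mod_cast hj)]
    simp

/-- Future splice: follow `x` strictly before `j + N`, and (a shifted copy of) `y`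
from `j` on; the two agree on the overlap `[j, j+N)`. -/
lemma exists_spliceFuture {E : V → V → Prop} (x y : MSpace E) (j : ℤ) (N : ℕ) (hN : 1 ≤ N)
    (h : ∀ i : ℤ, 0 ≤ i → i < N → x.1 (j + i) = y.1 i) :
    ∃ x' : MSpace E, (∀ n : ℤ, n < j + N → x'.1 n = x.1 n) ∧
      (∀ n : ℤ, j ≤ n → x'.1 n = y.1 (n - j)) := by
  classical
  refine ⟨⟨fun n => if n < j + N then x.1 n else y.1 (n - j), ?_⟩, ?_, ?_⟩
  · intro n
    by_cases h1 : n + 1 < j + N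
    · have h0 : n < j + N := by omega
      simpa [h0, h1] using x.2 n
    · by_cases h0 : n < j + N
      · -- n + 1 = j + N
        have hn : n = j + N - 1 := by omega
        simp only [h0, if_pos, h1, if_neg]
        have hx : x.1 n = y.1 (n - j) := by
          have := h (n - j) (by omega) (by omega)
          rwa [show j + (n - j) = n by ring] at this
        rw [hx]
        have := y.2 (n - j)
        rwa [show n - j + 1 = n + 1 - j by ring] at this
      · have h2 : ¬ (n + 1 < j + N) := by omega
        simp only [h0, if_neg, h2, if_neg]
        have := y.2 (n - j)
        rwa [show n - j + 1 = n + 1 - j by ring] at this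
  · intro n hn; simp [hn]
  · intro n hn
    by_cases h0 : n < j + N
    · simp only [h0, if_pos]
      have := h (n - j) (by omega) (by omega)
      rwa [show j + (n - j) = n by ring] at this
    · simp [h0]

/-- Past splice: follow `x` from `j` on, and a shifted copy of `y` before `j + N`. -/
lemma exists_splicePast {E : V → V → Prop} (x y : MSpace E) (j : ℤ) (N : ℕ) (hN : 1 ≤ N)
    (h : ∀ i : ℤ, 0 ≤ i → i < N → x.1 (j + i) = y.1 i) :
    ∃ x' : MSpace E, (∀ n : ℤ, j ≤ n → x'.1 n = x.1 n) ∧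
      (∀ n : ℤ, n < j + N → x'.1 n = y.1 (n - j)) := by
  classical
  refine ⟨⟨fun n => if j ≤ n then x.1 n else y.1 (n - j), ?_⟩, ?_, ?_⟩
  · intro n
    by_cases h0 : j ≤ n
    · have h1 : j ≤ n + 1 := by omega
      simpa [h0, h1] using x.2 n
    · by_cases h1 : j ≤ n + 1
      · -- n + 1 = j
        have hn : n + 1 = j := by omega
        simp only [h0, if_neg, h1, if_pos]
        have hx : x.1 (n + 1) = y.1 (n + 1 - j) := by
          have := h (n + 1 - j) (by omega) (by omega)
          rwa [show j + (n + 1 - j) = n + 1 by ring] at this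
        rw [hx]
        have := y.2 (n - j)
        rwa [show n - j + 1 = n + 1 - j by ring] at this
      · simp only [h0, if_neg, h1, if_neg]
        have := y.2 (n - j)
        rwa [show n - j + 1 = n + 1 - j by ring] at this
  · intro n hn; simp [hn]
  · intro n hn
    by_cases h0 : j ≤ n
    · simp only [h0, if_pos]
      have := h (n - j) (by omega) (by omega)
      rwa [show j + (n - j) = n by ring] at this
    · simp [h0]

end Aux2
section Aux3

variable {V VS VT VR : Type}

lemma occursAt_append {E : V → V → Prop} {u v : List V} {x : MSpace E} {i : ℤ}
    (hu : occursAt E u x i) (hv : occursAt E v x (i + u.length)) :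
    occursAt E (u ++ v) x i := by
  rw [occursAt_def'] at hu hv ⊢
  intro k hk
  simp only [List.length_append] at hk
  by_cases h : k < u.length
  · rw [List.getElem_append_left h]
    exact hu k h
  · rw [List.getElem_append_right (by omega)]
    have := hv (k - u.length) (by omega)
    rw [show i + (u.length : ℤ) + ((k - u.length : ℕ) : ℤ) = i + k by omega] at this
    exact this

variable {ES : VS → VS → Prop} {ER : VR → VR → Prop}
variable {φ : MSpace ER → MSpace ES} {Φ : VR → VS}

lemma oneblock_shiftBy (hΦ : ∀ x n, (φ x).1 n = Φ (x.1 n)) (j : ℤ) (x : MSpace ER) :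
    φ (shiftBy j x) = shiftBy j (φ x) := by
  apply Subtype.ext
  funext n
  show (φ (shiftBy j x)).1 n = (shiftBy j (φ x)).1 n
  rw [hΦ, shiftBy_apply, shiftBy_apply, hΦ]

lemma oneblock_mShift (hΦ : ∀ x n, (φ x).1 n = Φ (x.1 n)) (x : MSpace ER) :
    φ (mShift ER x) = mShift ES (φ x) := by
  apply Subtype.ext
  funext n
  show (φ (mShift ER x)).1 n = ((φ x).1 (n + 1))
  rw [hΦ, hΦ]
  rfl

lemma occursAt_map (hΦ : ∀ x n, (φ x).1 n = Φ (x.1 n)) {w : List VR} {x : MSpace ER} {i : ℤ}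
    (h : occursAt ER w x i) : occursAt ES (w.map Φ) (φ x) i := by
  rw [occursAt_def'] at h ⊢
  intro k hk
  simp only [List.length_map] at hk
  rw [hΦ, h k hk, List.getElem_map]

/-- The central decoding lemma extracted from the magic word property: if `φ x` carries
two occurrences of the magic word `W` at `q₁ ≤ q₂` and `φ x`, `φ x'` agree on the whole
stretch `[q₁, q₂ + |W|)`, then `x` and `x'` agree on `[q₁ + I, q₁ + I + (q₂ - q₁))`. -/
lemma magic_decode (hΦ : ∀ x n, (φ x).1 n = Φ (x.1 n)) {W : List VS} {I : ℤ}
    (huniq : ∀ (C : List VS) (x x' : MSpace ER),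
      occursAt ES (W ++ C ++ W) (φ x) 0 → occursAt ES (W ++ C ++ W) (φ x') 0 →
      ∀ k : ℕ, k < W.length + C.length → x.1 (I + k) = x'.1 (I + k))
    (x x' : MSpace ER) (q₁ q₂ : ℤ) (h12 : q₁ + W.length ≤ q₂)
    (h1 : occursAt ES W (φ x) q₁) (h2 : occursAt ES W (φ x) q₂)
    (hag : ∀ i : ℤ, q₁ ≤ i → i < q₂ + W.length → (φ x).1 i = (φ x').1 i) :
    ∀ i : ℤ, q₁ + I ≤ i → i < q₁ + I + (q₂ - q₁) → x.1 i = x'.1 i := by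
  set d : ℕ := (q₂ - q₁ - W.length).toNat with hd
  set C : List VS := sliceWord (φ x) (q₁ + W.length) d with hC
  have hCd : C.length = d := by simp [hC]
  have hdq : (d : ℤ) = q₂ - q₁ - W.length := by omega
  -- occurrences of W ++ C ++ W
  have hx : occursAt ES (W ++ C ++ W) (φ x) q₁ := by
    apply occursAt_append
    · apply occursAt_append h1
      exact occursAt_sliceWord_self (φ x) (q₁ + W.length) d
    · have hlen : ((W ++ C).length : ℤ) = (W.length : ℤ) + d := by simp [hCd]
      rw [hlen, show q₁ + ((W.length : ℤ) + d) = q₂ by omega]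
      exact h2
  have hx' : occursAt ES (W ++ C ++ W) (φ x') q₁ := by
    rw [occursAt_def'] at hx ⊢
    intro k hk
    rw [← hag (q₁ + k) (by omega) (by
        simp only [List.length_append, hCd] at hk
        omega)]
    exact hx k hk
  -- shift to the origin and apply uniqueness
  have hxs : occursAt ES (W ++ C ++ W) (φ (shiftBy q₁ x)) 0 := by
    rw [oneblock_shiftBy hΦ, occursAt_shiftBy]
    simpa using hx
  have hxs' : occursAt ES (W ++ C ++ W) (φ (shiftBy q₁ x')) 0 := by
    rw [oneblock_shiftBy hΦ, occursAt_shiftBy]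
    simpa using hx'
  have key := huniq C (shiftBy q₁ x) (shiftBy q₁ x') hxs hxs'
  intro i hi1 hi2
  have hk : (i - q₁ - I).toNat < W.length + C.length := by
    simp only [hCd]; omega
  have := key (i - q₁ - I).toNat hk
  simp only [shiftBy_apply] at this
  rw [show I + ((i - q₁ - I).toNat : ℤ) + q₁ = i by omega] at this
  exact this

end Aux3
section Aux4

variable {V VS VT VR : Type}

/-- Close a finite path into a bi-infinite periodic point. -/
lemma close_loop {E : V → V → Prop} (hirr : GraphIrreducible E)
    (p : ℕ → V) (n : ℕ) (hp : ∀ i < n, E (p i) (p (i + 1))) :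
    ∃ (x : MSpace E) (L : ℕ), n < L ∧ (∀ (m k : ℤ), x.1 (m + k * L) = x.1 m) ∧
      ∀ j : ℕ, j ≤ n → x.1 (j : ℤ) = p j := by
  obtain ⟨t, ht, ht1, c, hc0, hct, hce⟩ := exists_long_path hirr (p n) (p 0) 1
  classical
  set P : ℕ → V := fun i => if i ≤ n then p i else c (i - n) with hP
  have hedge : ∀ i < n + t, E (P i) (P (i + 1)) := by
    intro i hi
    rcases lt_trichotomy i n with h | h | h
    · have e1 : i ≤ n := by omega
      have e2 : i + 1 ≤ n := by omega
      simpa [hP, e1, e2] using hp i h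
    · subst h
      have e2 : ¬ (i + 1 ≤ i) := by omega
      simp only [hP, le_refl, if_pos, e2, if_neg]
      rw [show i + 1 - i = 0 + 1 by omega, ← hc0]
      exact hce 0 (by omega)
    · have e1 : ¬ (i ≤ n) := by omega
      have e2 : ¬ (i + 1 ≤ n) := by omega
      simp only [hP, e1, if_neg, e2]
      have := hce (i - n) (by omega)
      rwa [show i - n + 1 = i + 1 - n by omega] at this
  have hPL : P (n + t) = P 0 := by
    have e1 : ¬ (n + t ≤ n) := by omega
    simp only [hP, e1, if_neg, le_refl, if_pos]
    rw [show n + t - n = t by omega, hct]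
    simp
  obtain ⟨x, hxper, hxval⟩ := exists_periodic_point_fn P (n + t) (by omega) hedge hPL
  refine ⟨x, n + t, by omega, hxper, fun j hj => ?_⟩
  rw [hxval j (by omega)]
  simp [hP, hj]

lemma exists_mul_ge (L : ℕ) (hL : 1 ≤ L) (o N : ℤ) : ∃ k : ℤ, N ≤ o + k * L := by
  refine ⟨(N - o).natAbs, ?_⟩
  have h1 : (N - o) ≤ ((N - o).natAbs : ℤ) := Int.le_natAbs
  have h2 : ((N - o).natAbs : ℤ) * 1 ≤ ((N - o).natAbs : ℤ) * L := by
    apply mul_le_mul_of_nonneg_left (by exact_mod_cast hL) (by positivity)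
  omega

lemma exists_mul_le (L : ℕ) (hL : 1 ≤ L) (o N : ℤ) : ∃ k : ℤ, o + k * L ≤ N := by
  obtain ⟨k, hk⟩ := exists_mul_ge L hL (-o) (-N)
  refine ⟨-k, ?_⟩
  rw [neg_mul]
  omega

lemma periodic_occ_shift {E : V → V → Prop} {x : MSpace E} {L : ℕ}
    (hper : ∀ (n k : ℤ), x.1 (n + k * L) = x.1 n) {w : List V} {o : ℤ}
    (h : occursAt E w x o) (k : ℤ) : occursAt E w x (o + k * L) := by
  rw [occursAt_def'] at h ⊢
  intro j hj
  rw [show o + k * L + j = (o + j) + k * L by ring, hper]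
  exact h j hj

/-- A point with a periodic occurrence sees the word infinitely often in both directions. -/
lemma periodic_occ_future {E : V → V → Prop} {x : MSpace E} {L : ℕ} (hL : 1 ≤ L)
    (hper : ∀ (n k : ℤ), x.1 (n + k * L) = x.1 n) {w : List V} {o : ℤ}
    (h : occursAt E w x o) : ∀ N : ℤ, ∃ i : ℤ, N ≤ i ∧ occursAt E w x i := by
  intro N
  obtain ⟨k, hk⟩ := exists_mul_ge L hL o N
  exact ⟨o + k * L, hk, periodic_occ_shift hper h k⟩

lemma periodic_occ_past {E : V → V → Prop} {x : MSpace E} {L : ℕ} (hL : 1 ≤ L)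
    (hper : ∀ (n k : ℤ), x.1 (n + k * L) = x.1 n) {w : List V} {o : ℤ}
    (h : occursAt E w x o) : ∀ N : ℤ, ∃ i : ℤ, i ≤ N ∧ occursAt E w x i := by
  intro N
  obtain ⟨k, hk⟩ := exists_mul_le L hL o N
  exact ⟨o + k * L, hk, periodic_occ_shift hper h k⟩

variable {ES : VS → VS → Prop} {ER : VR → VR → Prop}
variable {φ : MSpace ER → MSpace ES} {Φ : VR → VS}

/-- Any `S`-word is, up to the magic-word lift, the `Φ`-image of an `R`-path-word. -/
lemma lift_word (hirrS : GraphIrreducible ES)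
    (hΦ : ∀ x n, (φ x).1 n = Φ (x.1 n)) {W1 : List VS}
    (hlift : ∀ y : MSpace ES, (∀ N : ℤ, ∃ i : ℤ, N ≤ i ∧ occursAt ES W1 y i) →
      (∀ N : ℤ, ∃ i : ℤ, i ≤ N ∧ occursAt ES W1 y i) → ∃ x, φ x = y)
    (hW1 : IsWord ES W1) {s : List VS} (hs : IsWord ES s) :
    ∃ sR : List VR, sR.map Φ = s ∧ PathWord ER sR := by
  classical
  obtain ⟨hW1ne, yW, iW, hWocc⟩ := hW1
  obtain ⟨hsne, ys, is, hsocc⟩ := hs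
  have hWpw : PathWord ES W1 := pathWord_of_occursAt hW1ne hWocc
  have hspw : PathWord ES s := pathWord_of_occursAt hsne hsocc
  have hW1pos : 0 < W1.length := List.length_pos_iff.2 hW1ne
  have hspos : 0 < s.length := List.length_pos_iff.2 hsne
  -- initial path running through W1
  set d : VS := W1.head hW1ne with hd
  set p₀ : ℕ → VS := wordFn W1 d with hp₀
  have hp₀e : ∀ i < W1.length - 1, ES (p₀ i) (p₀ (i + 1)) := by
    intro i hi
    have e1 : i < W1.length := by omega
    have e2 : i + 1 < W1.length := by omega
    have := hWpw.2 i e2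
    simpa [hp₀, wordFn, e1, e2] using this
  obtain ⟨q, o, hqp, ho, hqe, hqs⟩ := append_block hirrS p₀ (W1.length - 1) hp₀e s hspw 0
  obtain ⟨y, L, hnL, hyper, hyval⟩ := close_loop hirrS q (o + (s.length - 1)) (by
    intro i hi
    exact hqe i (by omega))
  have hL1 : 1 ≤ L := by omega
  -- occurrences in y
  have hyW : occursAt ES W1 y 0 := by
    rw [occursAt_def']
    intro k hk
    have h1 : (k : ℤ) = ((k : ℕ) : ℤ) := rfl
    rw [show (0 : ℤ) + k = (k : ℕ) by push_cast; ring]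
    rw [hyval k (by omega)]
    rw [hqp k (by omega)]
    simp [hp₀, wordFn, hk]
  have hys : occursAt ES s y (o : ℤ) := by
    rw [occursAt_def']
    intro k hk
    rw [show (o : ℤ) + k = ((o + k : ℕ) : ℤ) by push_cast; ring]
    rw [hyval (o + k) (by omega)]
    exact hqs k hk
  obtain ⟨r, hr⟩ := hlift y (periodic_occ_future hL1 hyper hyW)
    (periodic_occ_past hL1 hyper hyW)
  refine ⟨sliceWord r o s.length, ?_, pathWord_sliceWord r o hspos⟩
  apply List.ext_getElem (by simp)
  intro k hk1 hk2
  simp only [List.getElem_map, sliceWord, List.getElem_ofFn]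
  have : Φ (r.1 ((o : ℤ) + k)) = (φ r).1 ((o : ℤ) + k) := (hΦ r _).symm
  rw [this, hr]
  rw [occursAt_def'] at hys
  exact hys k (by simpa [sliceWord] using hk1)

end Aux4
section Gadget

variable {V VS VT VR : Type}

lemma wordFn_path {E : V → V → Prop} {w : List V} (hw : PathWord E w) (d : V) :
    ∀ i < w.length - 1, E (wordFn w d i) (wordFn w d (i + 1)) := by
  intro i hi
  have e1 : i < w.length := by omega
  have e2 : i + 1 < w.length := by omega
  have := hw.2 i e2
  simpa [wordFn, e1, e2] using this

lemma wordFn_val {w : List V} (d : V) {k : ℕ} (hk : k < w.length) :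
    wordFn w d k = w[k] := by simp [wordFn, hk]

variable {ES : VS → VS → Prop} {ET : VT → VT → Prop} {ER : VR → VR → Prop}
variable {φ : MSpace ER → MSpace ES} {ψ : MSpace ER → MSpace ET}
variable {Φ : VR → VS} {Ψ : VR → VT}

/-- The universal "gadget": a periodic point of the common extension `R` whose `φ`-image
periodically displays `W1 … W2 … s … t … W2 … W1` (reading the appropriate images),
with all gaps at least `Λ`. -/
lemma exists_gadget
    (hirrR : GraphIrreducible ER) (hirrS : GraphIrreducible ES) (hirrT : GraphIrreducible ET)
    (hΦ : ∀ x n, (φ x).1 n = Φ (x.1 n)) (hΨ : ∀ x n, (ψ x).1 n = Ψ (x.1 n))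
    {W1 : List VS} {W2 : List VT}
    (hlift1 : ∀ y : MSpace ES, (∀ N : ℤ, ∃ i : ℤ, N ≤ i ∧ occursAt ES W1 y i) →
      (∀ N : ℤ, ∃ i : ℤ, i ≤ N ∧ occursAt ES W1 y i) → ∃ x, φ x = y)
    (hlift2 : ∀ y : MSpace ET, (∀ N : ℤ, ∃ i : ℤ, N ≤ i ∧ occursAt ET W2 y i) →
      (∀ N : ℤ, ∃ i : ℤ, i ≤ N ∧ occursAt ET W2 y i) → ∃ x, ψ x = y)
    (hW1 : IsWord ES W1) (hW2 : IsWord ET W2)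
    {s : List VS} {t : List VT} (hs : IsWord ES s) (ht : IsWord ET t) (Λ : ℕ) :
    ∃ (x₀ : MSpace ER) (L N oc1 os ot oc2 : ℕ),
      (∀ (n k : ℤ), x₀.1 (n + k * L) = x₀.1 n) ∧
      1 ≤ L ∧ N ≤ L ∧
      W1.length + Λ ≤ oc1 ∧ oc1 + W2.length + Λ ≤ os ∧ os + s.length + Λ ≤ ot ∧
      ot + t.length + Λ ≤ oc2 ∧ oc2 + W2.length + Λ + W1.length ≤ N ∧
      occursAt ES W1 (φ x₀) 0 ∧
      occursAt ET W2 (ψ x₀) (oc1 : ℤ) ∧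
      occursAt ES s (φ x₀) (os : ℤ) ∧
      occursAt ET t (ψ x₀) (ot : ℤ) ∧
      occursAt ET W2 (ψ x₀) (oc2 : ℤ) ∧
      occursAt ES W1 (φ x₀) ((N : ℤ) - W1.length) := by
  classical
  obtain ⟨a, haΦ, hapw⟩ := lift_word hirrS hΦ hlift1 hW1 hW1
  obtain ⟨c, hcΨ, hcpw⟩ := lift_word hirrT hΨ hlift2 hW2 hW2
  obtain ⟨sR, hsΦ, hspw⟩ := lift_word hirrS hΦ hlift1 hW1 hs
  obtain ⟨tR, htΨ, htpw⟩ := lift_word hirrT hΨ hlift2 hW2 ht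
  have hal : a.length = W1.length := by rw [← haΦ]; simp
  have hcl : c.length = W2.length := by rw [← hcΨ]; simp
  have hsl : sR.length = s.length := by rw [← hsΦ]; simp
  have htl : tR.length = t.length := by rw [← htΨ]; simp
  have hap : 0 < a.length := List.length_pos_iff.2 hapw.1
  have hcp : 0 < c.length := List.length_pos_iff.2 hcpw.1
  have hsp : 0 < sR.length := List.length_pos_iff.2 hspw.1
  have htp : 0 < tR.length := List.length_pos_iff.2 htpw.1
  set d : VR := a.head hapw.1 with hd
  set p₀ : ℕ → VR := wordFn a d with hp₀
  set n₀ : ℕ := a.length - 1 with hn₀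
  have hp₀e : ∀ i < n₀, ER (p₀ i) (p₀ (i + 1)) := wordFn_path hapw d
  obtain ⟨q₁, o₁, hq₁p, ho₁, hq₁e, hq₁b⟩ := append_block hirrR p₀ n₀ hp₀e c hcpw Λ
  set n₁ : ℕ := o₁ + (c.length - 1) with hn₁
  obtain ⟨q₂, o₂, hq₂p, ho₂, hq₂e, hq₂b⟩ :=
    append_block hirrR q₁ n₁ (fun i hi => hq₁e i (by omega)) sR hspw Λ
  set n₂ : ℕ := o₂ + (sR.length - 1) with hn₂
  obtain ⟨q₃, o₃, hq₃p, ho₃, hq₃e, hq₃b⟩ :=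
    append_block hirrR q₂ n₂ (fun i hi => hq₂e i (by omega)) tR htpw Λ
  set n₃ : ℕ := o₃ + (tR.length - 1) with hn₃
  obtain ⟨q₄, o₄, hq₄p, ho₄, hq₄e, hq₄b⟩ :=
    append_block hirrR q₃ n₃ (fun i hi => hq₃e i (by omega)) c hcpw Λ
  set n₄ : ℕ := o₄ + (c.length - 1) with hn₄
  obtain ⟨q₅, o₅, hq₅p, ho₅, hq₅e, hq₅b⟩ :=
    append_block hirrR q₄ n₄ (fun i hi => hq₄e i (by omega)) a hapw Λ
  set n₅ : ℕ := o₅ + (a.length - 1) with hn₅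
  obtain ⟨x₀, L, hnL, hper, hval⟩ := close_loop hirrR q₅ n₅ (fun i hi => hq₅e i (by omega))
  set N : ℕ := o₅ + a.length with hN
  -- occurrences of the blocks in x₀
  have occ_a1 : occursAt ER a x₀ 0 := by
    rw [occursAt_def']; intro k hk
    rw [show (0 : ℤ) + k = ((k : ℕ) : ℤ) by ring, hval k (by omega),
      hq₅p k (by omega), hq₄p k (by omega), hq₃p k (by omega), hq₂p k (by omega),
      hq₁p k (by omega)]
    exact wordFn_val d hk
  have occ_c1 : occursAt ER c x₀ (o₁ : ℤ) := by
    rw [occursAt_def']; intro k hk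
    rw [show (o₁ : ℤ) + k = ((o₁ + k : ℕ) : ℤ) by push_cast; ring, hval (o₁ + k) (by omega),
      hq₅p (o₁ + k) (by omega), hq₄p (o₁ + k) (by omega), hq₃p (o₁ + k) (by omega),
      hq₂p (o₁ + k) (by omega)]
    exact hq₁b k hk
  have occ_s : occursAt ER sR x₀ (o₂ : ℤ) := by
    rw [occursAt_def']; intro k hk
    rw [show (o₂ : ℤ) + k = ((o₂ + k : ℕ) : ℤ) by push_cast; ring, hval (o₂ + k) (by omega),
      hq₅p (o₂ + k) (by omega), hq₄p (o₂ + k) (by omega), hq₃p (o₂ + k) (by omega)]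
    exact hq₂b k hk
  have occ_t : occursAt ER tR x₀ (o₃ : ℤ) := by
    rw [occursAt_def']; intro k hk
    rw [show (o₃ : ℤ) + k = ((o₃ + k : ℕ) : ℤ) by push_cast; ring, hval (o₃ + k) (by omega),
      hq₅p (o₃ + k) (by omega), hq₄p (o₃ + k) (by omega)]
    exact hq₃b k hk
  have occ_c2 : occursAt ER c x₀ (o₄ : ℤ) := by
    rw [occursAt_def']; intro k hk
    rw [show (o₄ : ℤ) + k = ((o₄ + k : ℕ) : ℤ) by push_cast; ring, hval (o₄ + k) (by omega),
      hq₅p (o₄ + k) (by omega)]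
    exact hq₄b k hk
  have occ_a2 : occursAt ER a x₀ (o₅ : ℤ) := by
    rw [occursAt_def']; intro k hk
    rw [show (o₅ : ℤ) + k = ((o₅ + k : ℕ) : ℤ) by push_cast; ring, hval (o₅ + k) (by omega)]
    exact hq₅b k hk
  refine ⟨x₀, L, N, o₁, o₂, o₃, o₄, hper, by omega, by omega,
    by omega, by omega, by omega, by omega, by omega, ?_, ?_, ?_, ?_, ?_, ?_⟩
  · have := occursAt_map hΦ occ_a1; rwa [haΦ] at this
  · have := occursAt_map hΨ occ_c1; rwa [hcΨ] at this
  · have := occursAt_map hΦ occ_s; rwa [hsΦ] at this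
  · have := occursAt_map hΨ occ_t; rwa [htΨ] at this
  · have := occursAt_map hΨ occ_c2; rwa [hcΨ] at this
  · have h := occursAt_map hΦ occ_a2
    rw [haΦ] at h
    rwa [show ((N : ℤ) - W1.length) = (o₅ : ℤ) by omega]

end Gadget
section Meas

variable {V VS VT VR : Type}

lemma measurable_coord {E : V → V → Prop} [MeasurableSpace V] (n : ℤ) :
    Measurable fun x : MSpace E => x.1 n :=
  (measurable_pi_apply n).comp measurable_subtype_coe

lemma measurable_oneblock [MeasurableSpace VR] [MeasurableSpace VS]
    [Countable VR] [MeasurableSingletonClass VR]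
    {ER : VR → VR → Prop} {ES : VS → VS → Prop}
    {φ : MSpace ER → MSpace ES} {Φ : VR → VS} (hΦ : ∀ x n, (φ x).1 n = Φ (x.1 n)) :
    Measurable φ := by
  have h : Measurable fun x : MSpace ER => (φ x).1 := by
    apply measurable_pi_iff.2
    intro n
    have e : (fun x : MSpace ER => (φ x).1 n) = fun x => Φ (x.1 n) :=
      funext fun x => hΦ x n
    exact e ▸ (Measurable.of_discrete.comp (measurable_coord n))
  exact Measurable.subtype_mk h

lemma measurableSet_mspace [MeasurableSpace V] [Countable V] [MeasurableSingletonClass V]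
    (E : V → V → Prop) :
    MeasurableSet {x : ℤ → V | ∀ n : ℤ, E (x n) (x (n + 1))} := by
  have he : {x : ℤ → V | ∀ n : ℤ, E (x n) (x (n + 1))} =
      ⋂ n : ℤ, {x : ℤ → V | (x n, x (n + 1)) ∈ {p : V × V | E p.1 p.2}} := by
    ext x; simp
  rw [he]
  refine MeasurableSet.iInter fun n => ?_
  exact ((measurable_pi_apply n).prodMk (measurable_pi_apply (n + 1)))
    MeasurableSet.of_discrete

lemma standardBorel_mspace [MeasurableSpace V] [Countable V] [MeasurableSingletonClass V]
    (E : V → V → Prop) : StandardBorelSpace (MSpace E) :=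
  (measurableSet_mspace E).standardBorel

lemma exists_retraction [MeasurableSpace VR] [MeasurableSpace VS]
    [Countable VR] [MeasurableSingletonClass VR]
    [Countable VS] [MeasurableSingletonClass VS]
    {ER : VR → VR → Prop} {ES : VS → VS → Prop}
    {φ : MSpace ER → MSpace ES}
    (hm : Measurable φ) (hinj : Function.Injective φ) (r₀ : MSpace ER) :
    ∃ ρ : MSpace ES → MSpace ER, Measurable ρ ∧ ∀ r : MSpace ER, ρ (φ r) = r := by
  classical
  haveI : StandardBorelSpace (MSpace ER) := standardBorel_mspace ER
  haveI : StandardBorelSpace (MSpace ES) := standardBorel_mspace ES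
  have hemb : MeasurableEmbedding φ := hm.measurableEmbedding hinj
  set ρ : MSpace ES → MSpace ER :=
    fun y => if h : ∃ r, φ r = y then h.choose else r₀ with hρ
  have hre : ∀ r, ρ (φ r) = r := by
    intro r
    have h : ∃ r', φ r' = φ r := ⟨r, rfl⟩
    simp only [hρ, dif_pos h]
    exact hinj h.choose_spec
  refine ⟨ρ, ?_, hre⟩
  intro A hA
  have hdec : ρ ⁻¹' A = (φ '' A) ∪ ((Set.range φ)ᶜ ∩ {y | r₀ ∈ A}) := by
    ext y
    by_cases hy : ∃ r, φ r = y
    · obtain ⟨r, rfl⟩ := hy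
      simp only [Set.mem_preimage, hre, Set.mem_union, Set.mem_inter_iff,
        Set.mem_compl_iff, Set.mem_range, Set.mem_image, Set.mem_setOf_eq]
      constructor
      · intro h; exact Or.inl ⟨r, h, rfl⟩
      · rintro (⟨r', hr', he⟩ | ⟨h1, _⟩)
        · rwa [← hinj he]
        · exact absurd ⟨r, rfl⟩ h1
    · have hy' : y ∉ Set.range φ := by
        intro ⟨r, hr⟩; exact hy ⟨r, hr⟩
      simp only [Set.mem_preimage, hρ, dif_neg hy, Set.mem_union, Set.mem_inter_iff,
        Set.mem_compl_iff, Set.mem_image, Set.mem_setOf_eq]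
      constructor
      · intro h; exact Or.inr ⟨hy', h⟩
      · rintro (⟨r', _, he⟩ | ⟨_, h2⟩)
        · exact absurd ⟨r', he⟩ hy
        · exact h2
  rw [hdec]
  refine (hemb.measurableSet_image.2 hA).union ?_
  refine (hemb.measurableSet_range.compl).inter ?_
  by_cases h : r₀ ∈ A
  · have : {y : MSpace ES | r₀ ∈ A} = Set.univ := by ext; simp [h]
    rw [this]; exact MeasurableSet.univ
  · have : {y : MSpace ES | r₀ ∈ A} = ∅ := by ext; simp [h]
    rw [this]; exact MeasurableSet.empty

lemma measurableSet_occursAt [MeasurableSpace V] [MeasurableSingletonClass V]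
    {E : V → V → Prop} (w : List V) (i : ℤ) :
    MeasurableSet {x : MSpace E | occursAt E w x i} := by
  have he : {x : MSpace E | occursAt E w x i} =
      ⋂ k : Fin w.length, {x : MSpace E | x.1 (i + (k : ℕ)) ∈ ({w.get k} : Set V)} := by
    ext x; simp [occursAt]
  rw [he]
  exact MeasurableSet.iInter fun k => (measurable_coord _) (measurableSet_singleton _)

lemma measurableSet_SWords [MeasurableSpace V] [Countable V] [MeasurableSingletonClass V]
    {E : V → V → Prop} (𝒲 : Set (List V)) :
    MeasurableSet (SWords E 𝒲) := by
  haveI : Countable 𝒲 := (Set.to_countable 𝒲).to_subtype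
  have he : SWords E 𝒲 =
      (⋂ N : ℤ, ⋃ i : ℤ, ⋃ (_ : N ≤ i), ⋃ w : 𝒲, {x : MSpace E | occursAt E (w : List V) x i}) ∩
      (⋂ N : ℤ, ⋃ i : ℤ, ⋃ (_ : i ≤ N), ⋃ w : 𝒲, {x : MSpace E | occursAt E (w : List V) x i}) := by
    ext x
    simp only [SWords, Set.mem_setOf_eq, Set.mem_inter_iff, Set.mem_iInter, Set.mem_iUnion]
    constructor
    · rintro ⟨h1, h2⟩
      refine ⟨fun N => ?_, fun N => ?_⟩
      · obtain ⟨i, hi, w, hw, ho⟩ := h1 N; exact ⟨i, hi, ⟨w, hw⟩, ho⟩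
      · obtain ⟨i, hi, w, hw, ho⟩ := h2 N; exact ⟨i, hi, ⟨w, hw⟩, ho⟩
    · rintro ⟨h1, h2⟩
      refine ⟨fun N => ?_, fun N => ?_⟩
      · obtain ⟨i, hi, ⟨w, hw⟩, ho⟩ := h1 N; exact ⟨i, hi, w, hw, ho⟩
      · obtain ⟨i, hi, ⟨w, hw⟩, ho⟩ := h2 N; exact ⟨i, hi, w, hw, ho⟩
  rw [he]
  refine MeasurableSet.inter ?_ ?_ <;>
    exact MeasurableSet.iInter fun N => MeasurableSet.iUnion fun i =>
      MeasurableSet.iUnion fun _ => MeasurableSet.iUnion fun w =>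
        measurableSet_occursAt _ _

lemma measurableSet_eqPoints {X : Type} [MeasurableSpace X]
    [MeasurableSpace V] [Countable V] [MeasurableSingletonClass V] {E : V → V → Prop}
    {u v : X → MSpace E} (hu : Measurable u) (hv : Measurable v) :
    MeasurableSet {x : X | u x = v x} := by
  have he : {x : X | u x = v x} =
      ⋂ n : ℤ, {x : X | ((u x).1 n, (v x).1 n) ∈ {p : V × V | p.1 = p.2}} := by
    ext x
    simp only [Set.mem_setOf_eq, Set.mem_iInter]
    constructor
    · intro h i; rw [h]
    · intro h; exact Subtype.ext (funext fun i => h i)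
  rw [he]
  exact MeasurableSet.iInter fun n =>
    (((measurable_coord n).comp hu).prodMk ((measurable_coord n).comp hv))
      MeasurableSet.of_discrete

end Meas
section Omega

lemma omega_nonneg {p : ℝ} (hp : 0 ≤ p) {ω : ℕ → ℝ} (ha : Antitone ω)
    (hs : Summable fun n : ℕ => (n : ℝ) ^ p * ω n) : ∀ n, 0 ≤ ω n := by
  have h0 : Filter.Tendsto (fun n : ℕ => (n : ℝ) ^ p * ω n) Filter.atTop (nhds 0) :=
    hs.tendsto_atTop_zero
  have hω0 : Filter.Tendsto ω Filter.atTop (nhds 0) := by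
    apply squeeze_zero_norm' ?_ (by simpa using h0.norm)
    filter_upwards [Filter.eventually_ge_atTop 1] with n hn
    have h1 : (1 : ℝ) ≤ (n : ℝ) ^ p := by
      calc (1 : ℝ) = (1 : ℝ) ^ p := (Real.one_rpow p).symm
        _ ≤ (n : ℝ) ^ p := Real.rpow_le_rpow zero_le_one (by exact_mod_cast hn) hp
    have h2 : |(n : ℝ) ^ p| = (n : ℝ) ^ p := abs_of_nonneg (by positivity)
    rw [Real.norm_eq_abs, h2]
    nlinarith [abs_nonneg (ω n)]
  intro n
  exact ha.le_of_tendsto hω0 n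

lemma omega_shift {p : ℝ} (hp : 0 ≤ p) {ω : ℕ → ℝ} (ha : Antitone ω)
    (hs : Summable fun n : ℕ => (n : ℝ) ^ p * ω n) (c : ℕ) :
    Antitone (fun n : ℕ => ω (n - c)) ∧
      Summable (fun n : ℕ => (n : ℝ) ^ p * ω (n - c)) := by
  have hnn := omega_nonneg hp ha hs
  constructor
  · intro m n hmn
    exact ha (by omega : m - c ≤ n - c)
  · have hs' : Summable (fun n : ℕ => ((n + 1 : ℕ) : ℝ) ^ p * ω (n + 1)) :=
      (_root_.summable_nat_add_iff 1).2 hs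
    have key : Summable (fun n : ℕ => (((n + (c + 1)) : ℕ) : ℝ) ^ p * ω ((n + (c + 1)) - c)) := by
      apply Summable.of_nonneg_of_le ?_ ?_ (hs'.mul_left ((1 + c : ℝ) ^ p))
      · intro n
        exact mul_nonneg (by positivity) (hnn _)
      · intro n
        have harg : n + (c + 1) - c = n + 1 := by omega
        rw [harg]
        have h1 : ((n + (c + 1) : ℕ) : ℝ) ≤ (1 + c : ℝ) * ((n + 1 : ℕ) : ℝ) := by
          push_cast; nlinarith
        have hb : ((n + (c + 1) : ℕ) : ℝ) ^ p ≤ (1 + c : ℝ) ^ p * ((n + 1 : ℕ) : ℝ) ^ p := by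
          calc ((n + (c + 1) : ℕ) : ℝ) ^ p ≤ ((1 + c : ℝ) * ((n + 1 : ℕ) : ℝ)) ^ p :=
                Real.rpow_le_rpow (by positivity) h1 hp
            _ = (1 + c : ℝ) ^ p * ((n + 1 : ℕ) : ℝ) ^ p :=
                Real.mul_rpow (by positivity) (by positivity)
        calc ((n + (c + 1) : ℕ) : ℝ) ^ p * ω (n + 1)
            ≤ ((1 + c : ℝ) ^ p * ((n + 1 : ℕ) : ℝ) ^ p) * ω (n + 1) :=
              mul_le_mul_of_nonneg_right hb (hnn _)
          _ = (1 + c : ℝ) ^ p * (((n + 1 : ℕ) : ℝ) ^ p * ω (n + 1)) := by ring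
    exact (_root_.summable_nat_add_iff (c + 1)).1 key

end Omega
section Decode

variable {V VS VT VR : Type}

/-- A word occurring inside a window slice occurs wherever the slice occurs. -/
lemma slice_sub_occ {E : V → V → Prop} {y z : MSpace E} {N u : ℕ} {w : List V} {q : ℤ}
    (hocc : occursAt E (sliceWord y 0 N) z q) (hw : occursAt E w y (u : ℤ))
    (hu : u + w.length ≤ N) : occursAt E w z (q + u) := by
  have h := occursAt_of_slice hocc hw (by positivity) (by push_cast; omega)
  simpa using h

variable {ES : VS → VS → Prop} {ER : VR → VR → Prop}
variable {φ : MSpace ER → MSpace ES} {Φ : VR → VS}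

/-- Transfer an occurrence from the canonical image point to the image of a point whose
coordinates agree with (a translate of) the canonical point. -/
lemma occ_transfer (hΦ : ∀ x n, (φ x).1 n = Φ (x.1 n)) {r x₀ : MSpace ER} {w : List VS}
    {β j : ℤ} (hw : occursAt ES w (φ x₀) β)
    (hagree : ∀ k : ℕ, k < w.length → r.1 (j + k) = x₀.1 (β + k)) :
    occursAt ES w (φ r) j := by
  rw [occursAt_def'] at hw ⊢
  intro k hk
  rw [hΦ, hagree k hk, ← hΦ]
  exact hw k hk

lemma periodic_image (hΦ : ∀ x n, (φ x).1 n = Φ (x.1 n)) {x₀ : MSpace ER} {L : ℕ}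
    (hper : ∀ (n k : ℤ), x₀.1 (n + k * L) = x₀.1 n) :
    ∀ (n k : ℤ), (φ x₀).1 (n + k * L) = (φ x₀).1 n := by
  intro n k
  rw [hΦ, hΦ, hper]

/-- The decoding of a (possibly multi-period) window around occurrences of a magic word. -/
lemma gadget_decode (hΦ : ∀ x n, (φ x).1 n = Φ (x.1 n)) {W : List VS} {I : ℤ}
    (huniq : ∀ (C : List VS) (x x' : MSpace ER),
      occursAt ES (W ++ C ++ W) (φ x) 0 → occursAt ES (W ++ C ++ W) (φ x') 0 →
      ∀ k : ℕ, k < W.length + C.length → x.1 (I + k) = x'.1 (I + k))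
    {x₀ : MSpace ER} {L N u₁ u₂ : ℕ}
    (hper : ∀ (n k : ℤ), x₀.1 (n + k * L) = x₀.1 n) (hNL : N ≤ L)
    (hu₁ : occursAt ES W (φ x₀) (u₁ : ℤ)) (hu₂ : occursAt ES W (φ x₀) (u₂ : ℤ))
    (hu12 : u₁ + W.length ≤ u₂) (hu₂N : u₂ + W.length ≤ N)
    (j M : ℕ) (hM : M = j * L + N) (r : MSpace ER) (q : ℤ)
    (hocc : occursAt ES (sliceWord (φ x₀) 0 M) (φ r) q) :
    ∀ i : ℤ, q + u₁ + I ≤ i → i < q + j * L + u₂ + I → r.1 i = x₀.1 (i - q) := by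
  have hperφ := periodic_image hΦ hper
  -- occurrences of W in φ r at q + u₁ and q + j*L + u₂
  have h1 : occursAt ES W (φ r) (q + u₁) := slice_sub_occ hocc hu₁ (by omega)
  have hu₂' : occursAt ES W (φ x₀) ((u₂ + j * L : ℕ) : ℤ) := by
    have h := periodic_occ_shift hperφ hu₂ (j : ℤ)
    have he : ((u₂ + j * L : ℕ) : ℤ) = (u₂ : ℤ) + (j : ℤ) * L := by push_cast; ring
    rwa [he]
  have h2 : occursAt ES W (φ r) (q + (u₂ + j * L : ℕ)) :=
    slice_sub_occ hocc hu₂' (by omega)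
  -- the canonical comparison point
  set x' : MSpace ER := shiftBy (-q) x₀ with hx'
  have hx'occ : occursAt ES (sliceWord (φ x₀) 0 M) (φ x') q := by
    rw [hx', oneblock_shiftBy hΦ, occursAt_shiftBy]
    simpa using occursAt_sliceWord_self (φ x₀) 0 M
  have hag : ∀ i : ℤ, q + u₁ ≤ i → i < q + (u₂ + j * L : ℕ) + W.length →
      (φ r).1 i = (φ x').1 i := by
    intro i hi1 hi2
    exact agree_of_occursAt_sliceWord hocc hx'occ i (by omega) (by push_cast; omega)
  have key := magic_decode hΦ huniq r x' (q + u₁) (q + (u₂ + j * L : ℕ))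
    (by push_cast; omega) h1 h2 hag
  intro i hi1 hi2
  have := key i (by omega) (by push_cast at hi2 ⊢; omega)
  rw [this, hx']
  simp [sub_eq_add_neg]

end Decode

section EA

variable {V : Type}

/-- The regularizing map used to extend functions from `S_{A}` to the whole shift:
given `x`, produce `x'` seeing `A` infinitely often in both directions, equal to `x`
if `x ∈ S_{A}`, and agreeing with `x` between any two occurrences of `A`. -/
lemma exists_eA {E : V → V → Prop} {y₀ : MSpace E} {L N : ℕ}
    (hL : 1 ≤ L) (hNL : N ≤ L) (hN : 1 ≤ N)
    (hper : ∀ (n k : ℤ), y₀.1 (n + k * L) = y₀.1 n)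
    {A : List V} (hA : A = sliceWord y₀ 0 N) (x : MSpace E) :
    ∃ x' : MSpace E,
      x' ∈ SWords E {A} ∧
      (x ∈ SWords E {A} → x' = x) ∧
      (∀ i j : ℤ, occursAt E A x i → occursAt E A x j →
        ∀ n : ℤ, i ≤ n → n ≤ j + N - 1 → x'.1 n = x.1 n) := by
  classical
  have hAy : occursAt E A y₀ 0 := by rw [hA]; exact occursAt_sliceWord_self y₀ 0 N
  have hAocc : ∀ k : ℤ, occursAt E A y₀ (k * L) := by
    intro k
    have := periodic_occ_shift hper hAy k
    simpa using this
  have hAlen : A.length = N := by rw [hA]; simp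
  -- membership helpers
  have hmem : ∀ z : MSpace E,
      (∀ M : ℤ, ∃ i : ℤ, M ≤ i ∧ occursAt E A z i) →
      (∀ M : ℤ, ∃ i : ℤ, i ≤ M ∧ occursAt E A z i) → z ∈ SWords E {A} := by
    intro z h1 h2
    constructor
    · intro M; obtain ⟨i, hi, ho⟩ := h1 M; exact ⟨i, hi, A, rfl, ho⟩
    · intro M; obtain ⟨i, hi, ho⟩ := h2 M; exact ⟨i, hi, A, rfl, ho⟩
  have hmem' : ∀ z : MSpace E, z ∈ SWords E {A} →
      (∀ M : ℤ, ∃ i : ℤ, M ≤ i ∧ occursAt E A z i) ∧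
      (∀ M : ℤ, ∃ i : ℤ, i ≤ M ∧ occursAt E A z i) := by
    intro z hz
    constructor
    · intro M; obtain ⟨i, hi, w, hw, ho⟩ := hz.1 M
      rw [Set.mem_singleton_iff] at hw
      exact ⟨i, hi, hw ▸ ho⟩
    · intro M; obtain ⟨i, hi, w, hw, ho⟩ := hz.2 M
      rw [Set.mem_singleton_iff] at hw
      exact ⟨i, hi, hw ▸ ho⟩
  by_cases hx : x ∈ SWords E {A}
  · exact ⟨x, hx, fun _ => rfl, fun _ _ _ _ _ _ _ => rfl⟩
  by_cases h0 : ∃ i, occursAt E A x i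
  swap
  · -- no occurrence at all : take the canonical point
    refine ⟨y₀, hmem y₀ ?_ ?_, fun h => absurd h hx, fun i j hi _ _ _ _ => absurd ⟨i, hi⟩ h0⟩
    · intro M
      obtain ⟨k, hk⟩ := exists_mul_ge L hL 0 M
      exact ⟨0 + k * L, hk, by simpa using hAocc k⟩
    · intro M
      obtain ⟨k, hk⟩ := exists_mul_le L hL 0 M
      exact ⟨0 + k * L, hk, by simpa using hAocc k⟩
  obtain ⟨i₀, hi₀⟩ := h0
  -- stage 1 : fix the past if necessary
  have stage1 : ∃ x₁ : MSpace E,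
      (∀ i : ℤ, occursAt E A x i → ∀ n : ℤ, i ≤ n → x₁.1 n = x.1 n) ∧
      (∀ M : ℤ, ∃ i : ℤ, i ≤ M ∧ occursAt E A x₁ i) := by
    by_cases hP : ∀ M : ℤ, ∃ i : ℤ, i ≤ M ∧ occursAt E A x i
    · refine ⟨x, fun _ _ _ _ => rfl, hP⟩
    · push_neg at hP
      obtain ⟨M, hM⟩ := hP
      obtain ⟨jm, hjm, hjle⟩ := Int.exists_least_of_bdd (P := fun i => occursAt E A x i)
        ⟨M + 1, fun z hz => by
          by_contra hlt
          exact hM z (by omega) hz⟩ ⟨i₀, hi₀⟩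
      have hsl : ∀ i : ℤ, 0 ≤ i → i < N → x.1 (jm + i) = y₀.1 i := by
        intro i h1 h2
        have := eq_of_occursAt_sliceWord (hA ▸ hjm) i h1 h2
        simpa using this
      obtain ⟨x₁, hx₁a, hx₁b⟩ := exists_splicePast x y₀ jm N hN hsl
      refine ⟨x₁, ?_, ?_⟩
      · intro i hi n hn
        exact hx₁a n (le_trans (hjle i hi) hn)
      · intro M'
        obtain ⟨k, hk⟩ := exists_mul_le L hL jm (min M' (jm - L))
        refine ⟨jm + k * L, by omega, ?_⟩
        rw [occursAt_def']
        intro kk hkk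
        rw [hx₁b (jm + k * L + kk) (by
          have hkL : k * L ≤ -(L : ℤ) := by omega
          have : (kk : ℤ) < N := by omega
          omega)]
        have := hAocc k
        rw [occursAt_def'] at this
        have h := this kk hkk
        rwa [show jm + k * L + kk - jm = k * L + kk by ring]
  obtain ⟨x₁, hx₁agree, hx₁past⟩ := stage1
  have hx₁occ : ∀ i : ℤ, occursAt E A x i → occursAt E A x₁ i := by
    intro i hi
    rw [occursAt_def'] at hi ⊢
    intro k hk
    rw [hx₁agree i (by rwa [occursAt_def']) (i + k) (by omega)]
    exact hi k hk
  -- stage 2 : fix the future if necessary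
  by_cases hF : ∀ M : ℤ, ∃ i : ℤ, M ≤ i ∧ occursAt E A x i
  · refine ⟨x₁, hmem x₁ ?_ hx₁past, fun h => absurd h hx, ?_⟩
    · intro M
      obtain ⟨i, hi, ho⟩ := hF M
      exact ⟨i, hi, hx₁occ i ho⟩
    · intro i j hi _ n hn _
      exact hx₁agree i hi n hn
  · push_neg at hF
    obtain ⟨M, hM⟩ := hF
    obtain ⟨jp, hjp, hjge⟩ := Int.exists_greatest_of_bdd (P := fun i => occursAt E A x i)
      ⟨M, fun z hz => by
        by_contra hlt
        exact hM z (by omega) hz⟩ ⟨i₀, hi₀⟩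
    have hsl : ∀ i : ℤ, 0 ≤ i → i < N → x₁.1 (jp + i) = y₀.1 i := by
      intro i h1 h2
      rw [hx₁agree jp hjp (jp + i) (by omega)]
      have := eq_of_occursAt_sliceWord (hA ▸ hjp) i h1 h2
      simpa using this
    obtain ⟨x₂, hx₂a, hx₂b⟩ := exists_spliceFuture x₁ y₀ jp N hN hsl
    refine ⟨x₂, hmem x₂ ?_ ?_, fun h => absurd h hx, ?_⟩
    · -- future occurrences
      intro M'
      obtain ⟨k, hk⟩ := exists_mul_ge L hL jp (max M' jp)
      refine ⟨jp + k * L, by omega, ?_⟩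
      rw [occursAt_def']
      intro kk hkk
      rw [hx₂b (jp + k * L + kk) (by omega)]
      have := hAocc k
      rw [occursAt_def'] at this
      have h := this kk hkk
      rwa [show jp + k * L + kk - jp = k * L + kk by ring]
    · -- past occurrences survive
      intro M'
      obtain ⟨i, hi, ho⟩ := hx₁past (min M' (jp - N))
      refine ⟨i, by omega, ?_⟩
      rw [occursAt_def'] at ho ⊢
      intro kk hkk
      rw [hx₂a (i + kk) (by
        rw [hAlen] at hkk
        omega)]
      exact ho kk hkk
    · intro i j hi hj n hn1 hn2
      rw [hx₂a n (by
        have := hjge j hj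
        omega)]
      exact hx₁agree i hi n hn1

end EA
section Parts

lemma mem_SWords_singleton {V : Type} {E : V → V → Prop} {A : List V} {z : MSpace E} :
    z ∈ SWords E {A} ↔
      (∀ M : ℤ, ∃ i : ℤ, M ≤ i ∧ occursAt E A z i) ∧
      (∀ M : ℤ, ∃ i : ℤ, i ≤ M ∧ occursAt E A z i) := by
  constructor
  · intro hz
    constructor
    · intro M
      obtain ⟨i, hi, w, hw, ho⟩ := hz.1 M
      exact ⟨i, hi, (Set.mem_singleton_iff.1 hw) ▸ ho⟩
    · intro M
      obtain ⟨i, hi, w, hw, ho⟩ := hz.2 M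
      exact ⟨i, hi, (Set.mem_singleton_iff.1 hw) ▸ ho⟩
  · intro ⟨h1, h2⟩
    constructor
    · intro M; obtain ⟨i, hi, ho⟩ := h1 M; exact ⟨i, hi, A, rfl, ho⟩
    · intro M; obtain ⟨i, hi, ho⟩ := h2 M; exact ⟨i, hi, A, rfl, ho⟩

variable {VS VT VR : Type}
variable {ES : VS → VS → Prop} {ET : VT → VT → Prop} {ER : VR → VR → Prop}
variable {φ : MSpace ER → MSpace ES} {ψ : MSpace ER → MSpace ET}
variable {Φ : VR → VS} {Ψ : VR → VT}
variable {W1 : List VS} {W2 : List VT} {I1 I2 : ℤ}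

/-- Part (a) : the transfer of `E_p(S,𝒲)` regularity through `δ = γ⁻¹`. -/
lemma partA
    (hirrR : GraphIrreducible ER) (hirrS : GraphIrreducible ES) (hirrT : GraphIrreducible ET)
    (hΦ : ∀ x n, (φ x).1 n = Φ (x.1 n)) (hΨ : ∀ x n, (ψ x).1 n = Ψ (x.1 n))
    (hlift1 : ∀ y : MSpace ES, (∀ N : ℤ, ∃ i : ℤ, N ≤ i ∧ occursAt ES W1 y i) →
      (∀ N : ℤ, ∃ i : ℤ, i ≤ N ∧ occursAt ES W1 y i) → ∃ x, φ x = y)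
    (hlift2 : ∀ y : MSpace ET, (∀ N : ℤ, ∃ i : ℤ, N ≤ i ∧ occursAt ET W2 y i) →
      (∀ N : ℤ, ∃ i : ℤ, i ≤ N ∧ occursAt ET W2 y i) → ∃ x, ψ x = y)
    (huniq2 : ∀ (C : List VT) (x x' : MSpace ER),
      occursAt ET (W2 ++ C ++ W2) (ψ x) 0 → occursAt ET (W2 ++ C ++ W2) (ψ x') 0 →
      ∀ k : ℕ, k < W2.length + C.length → x.1 (I2 + k) = x'.1 (I2 + k))
    (hW1word : IsWord ES W1) (hW2word : IsWord ET W2)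
    (σ : MSpace ET → MSpace ER) (hσψ : ∀ r, σ (ψ r) = r)
    (K' : Set (MSpace ET)) (hK'ψ : ∀ y ∈ K', ψ (σ y) = y)
    {p : ℝ} (hp : 0 ≤ p)
    (𝒲 : Set (List VS)) (h𝒲ne : 𝒲.Nonempty) (h𝒲w : ∀ w ∈ 𝒲, IsWord ES w)
    (f : MSpace ES → ℝ) (hf : EvVar ES 𝒲 p f) :
    ∃ 𝒱 : Set (List VT), 𝒱.Nonempty ∧ (∀ v ∈ 𝒱, IsWord ET v) ∧
      EvVarOn ET K' 𝒱 p (fun y => f (φ (σ y))) := by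
  classical
  obtain ⟨w₀, hw₀⟩ := h𝒲ne
  obtain ⟨ω, hωa, hωs, hωb⟩ := hf
  obtain ⟨xa, La, Na, a1, as', at', a2, hper, hL1, hNL, g1, g2, g3, g4, g5,
    oW1a, oW2a, osa, ota, oW2b, oW1b⟩ :=
    exists_gadget hirrR hirrS hirrT hΦ hΨ hlift1 hlift2 hW1word hW2word (h𝒲w w₀ hw₀)
      hW2word (I2.natAbs + W1.length + W2.length + w₀.length + W2.length + 1)
  have hw1pos : 0 < W1.length := List.length_pos_iff.2 hW1word.1
  have hw2pos : 0 < W2.length := List.length_pos_iff.2 hW2word.1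
  have hI2a : I2 ≤ (I2.natAbs : ℤ) := Int.le_natAbs
  have hI2b : -(I2.natAbs : ℤ) ≤ I2 := by omega
  set B : List VT := sliceWord (ψ xa) 0 Na with hB
  have hBlen : B.length = Na := by rw [hB]; simp
  have hBword : IsWord ET B :=
    ⟨by rw [hB]; exact sliceWord_ne_nil _ _ (by omega), ψ xa, 0,
      by rw [hB]; exact occursAt_sliceWord_self _ 0 _⟩
  refine ⟨{B}, ⟨B, rfl⟩, ?_, ?_⟩
  · intro v hv
    rw [Set.mem_singleton_iff] at hv
    exact hv ▸ hBword
  set c : ℕ := max as' (Na - as' - w₀.length) with hc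
  obtain ⟨hω'a, hω's⟩ := omega_shift hp hωa hωs c
  refine ⟨fun n => ω (n - c), hω'a, hω's, ?_⟩
  intro y hy y' hy' m n hagree hbeg hend
  obtain ⟨b, hbmem, hblen, hbocc⟩ := hbeg
  rw [Set.mem_singleton_iff] at hbmem
  subst hbmem
  obtain ⟨b', hbmem', hblen', hbocc'⟩ := hend
  rw [Set.mem_singleton_iff] at hbmem'
  subst hbmem'
  rw [hBlen] at hblen hblen' hbocc'
  have hNam : Na ≤ m := hblen
  have hNan : Na ≤ n := hblen'
  have hyψ := hK'ψ y hy
  have hy'ψ := hK'ψ y' hy'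
  have hBfr : occursAt ET B (ψ (σ y)) (-(m : ℤ)) := by rw [hyψ]; exact hbocc
  have hBbk : occursAt ET B (ψ (σ y)) ((n : ℤ) - Na + 1) := by rw [hyψ]; exact hbocc'
  have hw₀occ : ∀ (rr : MSpace ER) (q : ℤ), occursAt ET B (ψ rr) q →
      occursAt ES w₀ (φ rr) (q + (as' : ℤ)) := by
    intro rr q hocc
    rw [hB] at hocc
    have hdec := gadget_decode hΨ huniq2 hper hNL oW2a oW2b (by omega) (by omega)
      0 Na (by omega) rr q hocc
    apply occ_transfer hΦ osa
    intro k hk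
    have hd := hdec (q + (as' : ℤ) + k) (by omega) (by push_cast; omega)
    rw [hd]
    congr 1
    ring
  have h1 : occursAt ET W2 (ψ (σ y)) (-(m : ℤ) + (a1 : ℤ)) := by
    rw [hyψ]
    exact slice_sub_occ (hB ▸ hbocc) oW2a (by omega)
  have h2 : occursAt ET W2 (ψ (σ y)) ((n : ℤ) - Na + 1 + (a2 : ℤ)) := by
    rw [hyψ]
    exact slice_sub_occ (hB ▸ hbocc') oW2b (by omega)
  have hpair := magic_decode hΨ huniq2 (σ y) (σ y') (-(m : ℤ) + a1) ((n : ℤ) - Na + 1 + a2)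
    (by omega) h1 h2 (by
      intro i hi1 hi2
      rw [hyψ, hy'ψ]
      exact hagree i (by omega) (by omega))
  set mb : ℕ := m - as' with hmb
  set nb : ℕ := n - (Na - as' - w₀.length) with hnb
  have hw₀Na : as' + w₀.length ≤ Na := by omega
  have hcast1 : -((mb : ℕ) : ℤ) = -(m : ℤ) + as' := by push_cast; omega
  have hcast2 : ((nb : ℕ) : ℤ) = (n : ℤ) - Na + as' + w₀.length := by push_cast; omega
  have key := hωb (φ (σ y)) (Set.mem_univ _) (φ (σ y')) (Set.mem_univ _) mb nb
    (by
      intro i hi1 hi2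
      rw [hΦ, hΦ, hpair i (by omega) (by omega)])
    ⟨w₀, hw₀, by omega, by rw [hcast1]; exact hw₀occ (σ y) _ hBfr⟩
    ⟨w₀, hw₀, by omega, by
      rw [show ((nb : ℕ) : ℤ) - w₀.length + 1 = ((n : ℤ) - Na + 1) + (as' : ℤ) by omega]
      exact hw₀occ (σ y) _ hBbk⟩
  have e1 : ω nb ≤ ω (n - c) := hωa (by omega)
  have e2 : ω mb ≤ ω (m - c) := hωa (by omega)
  show |f (φ (σ y)) - f (φ (σ y'))| ≤ ω (n - c) + ω (m - c)
  calc |f (φ (σ y)) - f (φ (σ y'))| ≤ ω nb + ω mb := key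
    _ ≤ ω (n - c) + ω (m - c) := by linarith

end Parts
section PartB

variable {VS VT VR : Type}
variable {ES : VS → VS → Prop} {ET : VT → VT → Prop} {ER : VR → VR → Prop}
variable {φ : MSpace ER → MSpace ES} {ψ : MSpace ER → MSpace ET}
variable {Φ : VR → VS} {Ψ : VR → VT}
variable {W1 : List VS} {W2 : List VT} {I1 I2 : ℤ}

/-- Part (b) : surjectivity of the induced map modulo somewhere equivalence. -/
lemma partB
    (hirrR : GraphIrreducible ER) (hirrS : GraphIrreducible ES) (hirrT : GraphIrreducible ET)
    (hΦ : ∀ x n, (φ x).1 n = Φ (x.1 n)) (hΨ : ∀ x n, (ψ x).1 n = Ψ (x.1 n))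
    (hlift1 : ∀ y : MSpace ES, (∀ N : ℤ, ∃ i : ℤ, N ≤ i ∧ occursAt ES W1 y i) →
      (∀ N : ℤ, ∃ i : ℤ, i ≤ N ∧ occursAt ES W1 y i) → ∃ x, φ x = y)
    (hlift2 : ∀ y : MSpace ET, (∀ N : ℤ, ∃ i : ℤ, N ≤ i ∧ occursAt ET W2 y i) →
      (∀ N : ℤ, ∃ i : ℤ, i ≤ N ∧ occursAt ET W2 y i) → ∃ x, ψ x = y)
    (huniq1 : ∀ (C : List VS) (x x' : MSpace ER),
      occursAt ES (W1 ++ C ++ W1) (φ x) 0 → occursAt ES (W1 ++ C ++ W1) (φ x') 0 →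
      ∀ k : ℕ, k < W1.length + C.length → x.1 (I1 + k) = x'.1 (I1 + k))
    (huniq2 : ∀ (C : List VT) (x x' : MSpace ER),
      occursAt ET (W2 ++ C ++ W2) (ψ x) 0 → occursAt ET (W2 ++ C ++ W2) (ψ x') 0 →
      ∀ k : ℕ, k < W2.length + C.length → x.1 (I2 + k) = x'.1 (I2 + k))
    (hW1word : IsWord ES W1) (hW2word : IsWord ET W2)
    (ρ : MSpace ES → MSpace ER) (hρφ : ∀ r, ρ (φ r) = r)
    (σ : MSpace ET → MSpace ER) (hσψ : ∀ r, σ (ψ r) = r)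
    {p : ℝ} (hp : 0 ≤ p)
    (g : MSpace ET → ℝ) (hg : MemEp ET p g) :
    ∃ f : MSpace ES → ℝ, MemEp ES p f ∧ SomewhereEq ET g (fun y => f (φ (σ y))) := by
  classical
  obtain ⟨𝒱g, hVne, hVw, ωg, hωa, hωs, hωb⟩ := hg
  obtain ⟨v₀, hv₀⟩ := hVne
  obtain ⟨xb, Lb, Nb, b1, bs, bt, b2, hper, hL1, hNL, g1, g2, g3, g4, g5,
    oW1a, oW2a, osb, otb, oW2b, oW1b⟩ :=
    exists_gadget hirrR hirrS hirrT hΦ hΨ hlift1 hlift2 hW1word hW2word hW1word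
      (hVw v₀ hv₀) (I1.natAbs + I2.natAbs + W1.length + W2.length + v₀.length + 1)
  have hw1pos : 0 < W1.length := List.length_pos_iff.2 hW1word.1
  have hw2pos : 0 < W2.length := List.length_pos_iff.2 hW2word.1
  have hI1a : I1 ≤ (I1.natAbs : ℤ) := Int.le_natAbs
  have hI1b : -(I1.natAbs : ℤ) ≤ I1 := by omega
  have hI2a : I2 ≤ (I2.natAbs : ℤ) := Int.le_natAbs
  have hI2b : -(I2.natAbs : ℤ) ≤ I2 := by omega
  have oW1a' : occursAt ES W1 (φ xb) (((0 : ℕ) : ℤ)) := by exact_mod_cast oW1a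
  have oW1b' : occursAt ES W1 (φ xb) (((Nb - W1.length : ℕ) : ℤ)) := by
    have he : ((Nb - W1.length : ℕ) : ℤ) = (Nb : ℤ) - W1.length := by omega
    rw [he]; exact oW1b
  set A : List VS := sliceWord (φ xb) 0 Nb with hA
  have hAlen : A.length = Nb := by rw [hA]; simp
  have hAword : IsWord ES A :=
    ⟨by rw [hA]; exact sliceWord_ne_nil _ _ (by omega), φ xb, 0,
      by rw [hA]; exact occursAt_sliceWord_self _ 0 _⟩
  have hperφ := periodic_image hΦ hper
  choose e he1 he2 he3 using fun x : MSpace ES =>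
    exists_eA (y₀ := φ xb) hL1 hNL (by omega) hperφ hA x
  set f : MSpace ES → ℝ := fun x => g (ψ (ρ (e x))) with hf
  -- sees A infinitely often ⇒ in the range of φ
  have hlift : ∀ z ∈ SWords ES {A}, φ (ρ z) = z := by
    intro z hz
    rw [mem_SWords_singleton] at hz
    have h1 : ∀ M : ℤ, ∃ i : ℤ, M ≤ i ∧ occursAt ES W1 z i := by
      intro M
      obtain ⟨i, hi, ho⟩ := hz.1 M
      exact ⟨i, hi, by simpa using slice_sub_occ (hA ▸ ho) oW1a' (by omega)⟩
    have h2 : ∀ M : ℤ, ∃ i : ℤ, i ≤ M ∧ occursAt ES W1 z i := by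
      intro M
      obtain ⟨i, hi, ho⟩ := hz.2 M
      exact ⟨i, hi, by simpa using slice_sub_occ (hA ▸ ho) oW1a' (by omega)⟩
    obtain ⟨r, hr⟩ := hlift1 z h1 h2
    rw [← hr, hρφ]
  -- decoding an A-occurrence yields a v₀-occurrence downstairs
  have hv₀occ : ∀ (rr : MSpace ER) (q : ℤ), occursAt ES A (φ rr) q →
      occursAt ET v₀ (ψ rr) (q + (bt : ℤ)) := by
    intro rr q hocc
    rw [hA] at hocc
    have hdec := gadget_decode hΦ huniq1 hper hNL oW1a' oW1b' (by omega) (by omega)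
      0 Nb (by omega) rr q hocc
    apply occ_transfer hΨ otb
    intro k hk
    have hd := hdec (q + (bt : ℤ) + k) (by push_cast; omega) (by push_cast; omega)
    rw [hd]
    congr 1
    ring
  refine ⟨f, ⟨{A}, ⟨A, rfl⟩, ?_, ?_⟩, ?_⟩
  · intro w hw'
    rw [Set.mem_singleton_iff] at hw'
    exact hw' ▸ hAword
  · -- f has eventually p-summable variations w.r.t. {A}
    set c : ℕ := max bt (Nb - bt - v₀.length) with hc
    obtain ⟨hω'a, hω's⟩ := omega_shift hp hωa hωs c
    refine ⟨fun n => ωg (n - c), hω'a, hω's, ?_⟩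
    intro x _ y _ m n hagree hbeg hend
    obtain ⟨b, hbmem, hblen, hbocc⟩ := hbeg
    rw [Set.mem_singleton_iff] at hbmem
    subst hbmem
    obtain ⟨b', hbmem', hblen', hbocc'⟩ := hend
    rw [Set.mem_singleton_iff] at hbmem'
    subst hbmem'
    rw [hAlen] at hblen hblen' hbocc'
    have hNbm : Nb ≤ m := hblen
    have hNbn : Nb ≤ n := hblen'
    -- the regularized points agree with x resp. y on the window
    have hex : ∀ i : ℤ, -(m : ℤ) ≤ i → i ≤ (n : ℤ) → (e x).1 i = x.1 i := by
      intro i h1 h2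
      exact he3 x (-(m : ℤ)) ((n : ℤ) - Nb + 1) hbocc hbocc' i h1 (by omega)
    have hyocc : occursAt ES A y (-(m : ℤ)) := by
      rw [occursAt_def'] at hbocc ⊢
      intro k hk
      rw [hAlen] at hk
      rw [← hagree (-(m : ℤ) + k) (by omega) (by omega)]
      exact hbocc k (by rw [hAlen]; omega)
    have hyocc' : occursAt ES A y ((n : ℤ) - Nb + 1) := by
      rw [occursAt_def'] at hbocc' ⊢
      intro k hk
      rw [hAlen] at hk
      rw [← hagree ((n : ℤ) - Nb + 1 + k) (by omega) (by omega)]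
      exact hbocc' k (by rw [hAlen]; omega)
    have hey : ∀ i : ℤ, -(m : ℤ) ≤ i → i ≤ (n : ℤ) → (e y).1 i = y.1 i := by
      intro i h1 h2
      exact he3 y (-(m : ℤ)) ((n : ℤ) - Nb + 1) hyocc hyocc' i h1 (by omega)
    -- occurrences of A in e x and e y
    have hexfr : occursAt ES A (e x) (-(m : ℤ)) := by
      rw [occursAt_def'] at hbocc ⊢
      intro k hk
      rw [hex (-(m : ℤ) + k) (by omega) (by rw [hAlen] at hk; omega)]
      exact hbocc k hk
    have hexbk : occursAt ES A (e x) ((n : ℤ) - Nb + 1) := by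
      rw [occursAt_def'] at hbocc' ⊢
      intro k hk
      rw [hex ((n : ℤ) - Nb + 1 + k) (by rw [hAlen] at hk; omega) (by rw [hAlen] at hk; omega)]
      exact hbocc' k hk
    have heyfr : occursAt ES A (e y) (-(m : ℤ)) := by
      rw [occursAt_def'] at hyocc ⊢
      intro k hk
      rw [hey (-(m : ℤ) + k) (by omega) (by rw [hAlen] at hk; omega)]
      exact hyocc k hk
    have heybk : occursAt ES A (e y) ((n : ℤ) - Nb + 1) := by
      rw [occursAt_def'] at hyocc' ⊢
      intro k hk
      rw [hey ((n : ℤ) - Nb + 1 + k) (by rw [hAlen] at hk; omega) (by rw [hAlen] at hk; omega)]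
      exact hyocc' k hk
    have hρex : φ (ρ (e x)) = e x := hlift _ (he1 x)
    have hρey : φ (ρ (e y)) = e y := hlift _ (he1 y)
    have h1' : occursAt ES W1 (φ (ρ (e x))) (-(m : ℤ)) := by
      rw [hρex]
      simpa using slice_sub_occ (hA ▸ hexfr) oW1a' (by omega)
    have h2' : occursAt ES W1 (φ (ρ (e x))) ((n : ℤ) - W1.length + 1) := by
      rw [hρex]
      have h := slice_sub_occ (hA ▸ hexbk) oW1b' (by omega)
      rwa [show (n : ℤ) - Nb + 1 + ((Nb - W1.length : ℕ) : ℤ) = (n : ℤ) - W1.length + 1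
        by omega] at h
    have hpair := magic_decode hΦ huniq1 (ρ (e x)) (ρ (e y)) (-(m : ℤ))
      ((n : ℤ) - W1.length + 1) (by omega) h1' h2' (by
        intro i hi1 hi2
        rw [hρex, hρey, hex i (by omega) (by omega), hey i (by omega) (by omega)]
        exact hagree i (by omega) (by omega))
    have hvfr : occursAt ET v₀ (ψ (ρ (e x))) (-(m : ℤ) + bt) :=
      hv₀occ _ _ (by rw [hρex]; exact hexfr)
    have hvbk : occursAt ET v₀ (ψ (ρ (e x))) ((n : ℤ) - Nb + 1 + bt) :=
      hv₀occ _ _ (by rw [hρex]; exact hexbk)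
    set mb : ℕ := m - bt with hmb
    set nb : ℕ := n - (Nb - bt - v₀.length) with hnb
    have hbtNb : bt + v₀.length ≤ Nb := by omega
    have hcast1 : -((mb : ℕ) : ℤ) = -(m : ℤ) + bt := by push_cast; omega
    have hcast2 : ((nb : ℕ) : ℤ) = (n : ℤ) - Nb + bt + v₀.length := by push_cast; omega
    have key := hωb (ψ (ρ (e x))) (Set.mem_univ _) (ψ (ρ (e y))) (Set.mem_univ _) mb nb
      (by
        intro i hi1 hi2
        rw [hΨ, hΨ, hpair i (by omega) (by omega)])
      ⟨v₀, hv₀, by omega, by rw [hcast1]; exact hvfr⟩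
      ⟨v₀, hv₀, by omega, by
        rw [show ((nb : ℕ) : ℤ) - v₀.length + 1 = ((n : ℤ) - Nb + 1) + (bt : ℤ) by omega]
        exact hvbk⟩
    have e1 : ωg nb ≤ ωg (n - c) := hωa (by omega)
    have e2 : ωg mb ≤ ωg (m - c) := hωa (by omega)
    show |g (ψ (ρ (e x))) - g (ψ (ρ (e y)))| ≤ ωg (n - c) + ωg (m - c)
    calc |g (ψ (ρ (e x))) - g (ψ (ρ (e y)))| ≤ ωg nb + ωg mb := key
      _ ≤ ωg (n - c) + ωg (m - c) := by linarith
  · -- somewhere equivalence g = f ∘ δ on S_{Bp}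
    set Bp : List VT := sliceWord (ψ xb) 0 (2 * Lb + Nb) with hBp
    have hBpword : IsWord ET Bp :=
      ⟨by rw [hBp]; exact sliceWord_ne_nil _ _ (by omega), ψ xb, 0,
        by rw [hBp]; exact occursAt_sliceWord_self _ 0 _⟩
    refine ⟨{Bp}, ⟨Bp, rfl⟩, ?_, ?_⟩
    · intro w hw'
      rw [Set.mem_singleton_iff] at hw'
      exact hw' ▸ hBpword
    intro y hy
    rw [mem_SWords_singleton] at hy
    have hyfrW2 : ∀ M : ℤ, ∃ i : ℤ, M ≤ i ∧ occursAt ET W2 y i := by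
      intro M
      obtain ⟨i, hi, ho⟩ := hy.1 M
      exact ⟨i + b1, by omega, slice_sub_occ (hBp ▸ ho) oW2a (by omega)⟩
    have hypaW2 : ∀ M : ℤ, ∃ i : ℤ, i ≤ M ∧ occursAt ET W2 y i := by
      intro M
      obtain ⟨i, hi, ho⟩ := hy.2 (M - b1)
      exact ⟨i + b1, by omega, slice_sub_occ (hBp ▸ ho) oW2a (by omega)⟩
    obtain ⟨r, hr⟩ := hlift2 y hyfrW2 hypaW2
    have hσy : σ y = r := by rw [← hr, hσψ]
    have hmid : ∀ i : ℤ, occursAt ET Bp y i → occursAt ES A (φ r) (i + (Lb : ℤ)) := by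
      intro i hocc
      rw [hBp, ← hr] at hocc
      have hdec := gadget_decode hΨ huniq2 hper hNL oW2a oW2b (by omega) (by omega)
        2 (2 * Lb + Nb) (by omega) r i hocc
      rw [hA]
      apply occ_transfer hΦ (occursAt_sliceWord_self (φ xb) 0 Nb)
      intro k hk
      have hk' : k < Nb := by simpa using hk
      have hd := hdec (i + (Lb : ℤ) + k) (by push_cast; omega) (by push_cast; omega)
      rw [hd, show i + (Lb : ℤ) + (k : ℤ) - i = (k : ℤ) + 1 * (Lb : ℤ) by ring, hper]
      simp
    have hφrA : φ r ∈ SWords ES {A} := by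
      rw [mem_SWords_singleton]
      constructor
      · intro M
        obtain ⟨i, hi, ho⟩ := hy.1 M
        exact ⟨i + Lb, by omega, hmid i ho⟩
      · intro M
        obtain ⟨i, hi, ho⟩ := hy.2 (M - Lb)
        exact ⟨i + Lb, by omega, hmid i ho⟩
    have hefix : e (φ r) = φ r := he2 _ hφrA
    show g y = f (φ (σ y))
    rw [hσy]
    show g y = g (ψ (ρ (e (φ r))))
    rw [hefix, hρφ, hr]

end PartB
section PartC

variable {VS VT VR : Type}
variable {ES : VS → VS → Prop} {ET : VT → VT → Prop} {ER : VR → VR → Prop}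
variable {φ : MSpace ER → MSpace ES} {ψ : MSpace ER → MSpace ET}
variable {Φ : VR → VS} {Ψ : VR → VT}
variable {W1 : List VS} {W2 : List VT} {I1 I2 : ℤ}

/-- Part (c) : injectivity of the induced map modulo somewhere equivalence. -/
lemma partC
    (hirrR : GraphIrreducible ER) (hirrS : GraphIrreducible ES) (hirrT : GraphIrreducible ET)
    (hΦ : ∀ x n, (φ x).1 n = Φ (x.1 n)) (hΨ : ∀ x n, (ψ x).1 n = Ψ (x.1 n))
    (hlift1 : ∀ y : MSpace ES, (∀ N : ℤ, ∃ i : ℤ, N ≤ i ∧ occursAt ES W1 y i) →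
      (∀ N : ℤ, ∃ i : ℤ, i ≤ N ∧ occursAt ES W1 y i) → ∃ x, φ x = y)
    (hlift2 : ∀ y : MSpace ET, (∀ N : ℤ, ∃ i : ℤ, N ≤ i ∧ occursAt ET W2 y i) →
      (∀ N : ℤ, ∃ i : ℤ, i ≤ N ∧ occursAt ET W2 y i) → ∃ x, ψ x = y)
    (huniq1 : ∀ (C : List VS) (x x' : MSpace ER),
      occursAt ES (W1 ++ C ++ W1) (φ x) 0 → occursAt ES (W1 ++ C ++ W1) (φ x') 0 →
      ∀ k : ℕ, k < W1.length + C.length → x.1 (I1 + k) = x'.1 (I1 + k))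
    (hW1word : IsWord ES W1) (hW2word : IsWord ET W2)
    (ρ : MSpace ES → MSpace ER) (hρφ : ∀ r, ρ (φ r) = r)
    (σ : MSpace ET → MSpace ER) (hσψ : ∀ r, σ (ψ r) = r)
    (f f' : MSpace ES → ℝ)
    (hse : SomewhereEq ET (fun y => f (φ (σ y))) (fun y => f' (φ (σ y)))) :
    SomewhereEq ES f f' := by
  classical
  obtain ⟨𝒱₁, hne, hwords, heq⟩ := hse
  obtain ⟨v₁, hv₁⟩ := hne
  obtain ⟨xc, Lc, Nc, c1, cs, ct, c2, hper, hL1, hNL, g1, g2, g3, g4, g5,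
    oW1a, oW2a, osa, ota, oW2b, oW1b⟩ :=
    exists_gadget hirrR hirrS hirrT hΦ hΨ hlift1 hlift2 hW1word hW2word hW1word
      (hwords v₁ hv₁) (I1.natAbs + W1.length + W2.length + v₁.length + 1)
  have hw1pos : 0 < W1.length := List.length_pos_iff.2 hW1word.1
  have hw2pos : 0 < W2.length := List.length_pos_iff.2 hW2word.1
  have hI1a : I1 ≤ (I1.natAbs : ℤ) := Int.le_natAbs
  have hI1b : -(I1.natAbs : ℤ) ≤ I1 := by omega
  have oW1a' : occursAt ES W1 (φ xc) (((0 : ℕ) : ℤ)) := by exact_mod_cast oW1a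
  have oW1b' : occursAt ES W1 (φ xc) (((Nc - W1.length : ℕ) : ℤ)) := by
    have he : ((Nc - W1.length : ℕ) : ℤ) = (Nc : ℤ) - W1.length := by omega
    rw [he]; exact oW1b
  set A : List VS := sliceWord (φ xc) 0 Nc with hA
  have hAword : IsWord ES A :=
    ⟨by rw [hA]; exact sliceWord_ne_nil _ _ (by omega), φ xc, 0,
      by rw [hA]; exact occursAt_sliceWord_self _ 0 _⟩
  refine ⟨{A}, ⟨A, rfl⟩, ?_, ?_⟩
  · intro w hw'
    rw [Set.mem_singleton_iff] at hw'
    exact hw' ▸ hAword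
  intro x hx
  rw [mem_SWords_singleton] at hx
  have hfr : ∀ M : ℤ, ∃ i : ℤ, M ≤ i ∧ occursAt ES W1 x i := by
    intro M
    obtain ⟨i, hi, ho⟩ := hx.1 M
    exact ⟨i, hi, by simpa using slice_sub_occ (hA ▸ ho) oW1a' (by omega)⟩
  have hpa : ∀ M : ℤ, ∃ i : ℤ, i ≤ M ∧ occursAt ES W1 x i := by
    intro M
    obtain ⟨i, hi, ho⟩ := hx.2 M
    exact ⟨i, hi, by simpa using slice_sub_occ (hA ▸ ho) oW1a' (by omega)⟩
  obtain ⟨r, hr⟩ := hlift1 x hfr hpa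
  have hρx : φ (ρ x) = x := by rw [← hr, hρφ]
  have hv₁occ : ∀ q : ℤ, occursAt ES A x q → occursAt ET v₁ (ψ (ρ x)) (q + (ct : ℤ)) := by
    intro q hocc
    rw [hA, ← hρx] at hocc
    have hdec := gadget_decode hΦ huniq1 hper hNL oW1a' oW1b' (by omega) (by omega)
      0 Nc (by omega) (ρ x) q hocc
    apply occ_transfer hΨ ota
    intro k hk
    have hd := hdec (q + (ct : ℤ) + k) (by push_cast; omega) (by push_cast; omega)
    rw [hd]
    congr 1
    ring
  have hmemT : ψ (ρ x) ∈ SWords ET 𝒱₁ := by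
    constructor
    · intro M
      obtain ⟨i, hi, ho⟩ := hx.1 M
      exact ⟨i + ct, by omega, v₁, hv₁, hv₁occ i ho⟩
    · intro M
      obtain ⟨i, hi, ho⟩ := hx.2 (M - ct)
      exact ⟨i + ct, by omega, v₁, hv₁, hv₁occ i ho⟩
  have hkey := heq (ψ (ρ x)) hmemT
  simp only at hkey
  rw [hσψ, hρx] at hkey
  exact hkey

end PartC

/-- from Proposition 5.2: an almost isomorphism induces a
bijection `Γ : E_p(S) → E_p(T)` modulo somewhere equivalence, for every
`p ≥ 0`; in particular `f ∈ E_p(S,𝒲)` yields `𝒱` with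
`f ∘ γ⁻¹ ∈ E_p(T,𝒱)` (on the domain `K'` of `γ⁻¹`). -/
theorem almostIsomorphic_Ep_correspondence
    {VS VT VR : Type}
    [Countable VS] [MeasurableSpace VS] [MeasurableSingletonClass VS]
    [Countable VT] [MeasurableSpace VT] [MeasurableSingletonClass VT]
    [Countable VR] [MeasurableSpace VR] [MeasurableSingletonClass VR]
    (ES : VS → VS → Prop) (ET : VT → VT → Prop) (ER : VR → VR → Prop)
    (hS : IsMarkovShift ES) (hT : IsMarkovShift ET) (hR : IsMarkovShift ER)
    (φ : MSpace ER → MSpace ES) (ψ : MSpace ER → MSpace ET)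
    (hφ : MagicCode ER ES φ) (hψ : MagicCode ER ET ψ) :
    ∃ (K : Set (MSpace ES)) (K' : Set (MSpace ET))
      (γ : MSpace ES → MSpace ET) (δ : MSpace ET → MSpace ES),
      AICorrespondence ES ET ER φ ψ K K' γ δ ∧
      ∀ p : ℝ, 0 ≤ p →
        -- Γ is well defined: f ∈ E_p(S,𝒲) gives f∘γ⁻¹ ∈ E_p(T,𝒱) on K'
        (∀ 𝒲 : Set (List VS), 𝒲.Nonempty → (∀ w ∈ 𝒲, IsWord ES w) →
            ∀ f : MSpace ES → ℝ, EvVar ES 𝒲 p f →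
              ∃ 𝒱 : Set (List VT), 𝒱.Nonempty ∧ (∀ v ∈ 𝒱, IsWord ET v) ∧
                EvVarOn ET K' 𝒱 p (fun y => f (δ y))) ∧
        -- Γ is onto mod somewhere equivalence
        (∀ g : MSpace ET → ℝ, MemEp ET p g →
            ∃ f : MSpace ES → ℝ, MemEp ES p f ∧
              SomewhereEq ET g (fun y => f (δ y))) ∧
        -- Γ is injective mod somewhere equivalence
        (∀ f f' : MSpace ES → ℝ, MemEp ES p f → MemEp ES p f' →
            SomewhereEq ET (fun y => f (δ y)) (fun y => f' (δ y)) →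
            SomewhereEq ES f f') := by
  classical
  obtain ⟨⟨Φ, hΦ⟩, hφinj, W1, hW1word, hlift1, I1, huniq1⟩ := hφ
  obtain ⟨⟨Ψ, hΨ⟩, hψinj, W2, hW2word, hlift2, I2, huniq2⟩ := hψ
  have hirrS := hS.1
  have hirrT := hT.1
  have hirrR := hR.1
  have hw1pos : 0 < W1.length := List.length_pos_iff.2 hW1word.1
  have hw2pos : 0 < W2.length := List.length_pos_iff.2 hW2word.1
  have hI2a : I2 ≤ (I2.natAbs : ℤ) := Int.le_natAbs
  have hI2b : -(I2.natAbs : ℤ) ≤ I2 := by omega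
  -- base gadget
  obtain ⟨x₀, L₀, N₀, c₁, s₀, t₀, c₂, hper₀, hL₀, hNL₀, g1, g2, g3, g4, g5,
    oW1a, oW2a, osa, ota, oW2b, oW1b⟩ :=
    exists_gadget hirrR hirrS hirrT hΦ hΨ hlift1 hlift2 hW1word hW2word hW1word hW2word
      (I1.natAbs + I2.natAbs + W1.length + W2.length + 1)
  have oW1a' : occursAt ES W1 (φ x₀) (((0 : ℕ) : ℤ)) := by exact_mod_cast oW1a
  set A₀ : List VS := sliceWord (φ x₀) 0 N₀ with hA₀
  have hA₀word : IsWord ES A₀ :=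
    ⟨by rw [hA₀]; exact sliceWord_ne_nil _ _ (by omega), φ x₀, 0,
      by rw [hA₀]; exact occursAt_sliceWord_self _ 0 _⟩
  set Bp₀ : List VT := sliceWord (ψ x₀) 0 (2 * L₀ + N₀) with hBp₀
  have hBp₀word : IsWord ET Bp₀ :=
    ⟨by rw [hBp₀]; exact sliceWord_ne_nil _ _ (by omega), ψ x₀, 0,
      by rw [hBp₀]; exact occursAt_sliceWord_self _ 0 _⟩
  set K : Set (MSpace ES) := SWords ES {A₀} with hKdef
  have hφm : Measurable φ := measurable_oneblock hΦ
  have hψm : Measurable ψ := measurable_oneblock hΨ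
  obtain ⟨ρ, hρm, hρφ⟩ := exists_retraction hφm hφinj x₀
  obtain ⟨σ, hσm, hσψ⟩ := exists_retraction hψm hψinj x₀
  set K' : Set (MSpace ET) :=
    {y | ψ (σ y) = y} ∩ (fun y => φ (σ y)) ⁻¹' K with hK'def
  have hK'1 : ∀ y ∈ K', ψ (σ y) = y := fun y hy => hy.1
  -- points of K are in the range of φ
  have hKlift : ∀ z ∈ K, φ (ρ z) = z := by
    intro z hz
    rw [hKdef, mem_SWords_singleton] at hz
    have h1 : ∀ M : ℤ, ∃ i : ℤ, M ≤ i ∧ occursAt ES W1 z i := by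
      intro M
      obtain ⟨i, hi, ho⟩ := hz.1 M
      exact ⟨i, hi, by simpa using slice_sub_occ (hA₀ ▸ ho) oW1a' (by omega)⟩
    have h2 : ∀ M : ℤ, ∃ i : ℤ, i ≤ M ∧ occursAt ES W1 z i := by
      intro M
      obtain ⟨i, hi, ho⟩ := hz.2 M
      exact ⟨i, hi, by simpa using slice_sub_occ (hA₀ ▸ ho) oW1a' (by omega)⟩
    obtain ⟨r, hr⟩ := hlift1 z h1 h2
    rw [← hr, hρφ]
  -- T-points seeing Bp₀ infinitely often are in K'
  have hVsub : SWords ET {Bp₀} ⊆ K' := by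
    intro y hy
    rw [mem_SWords_singleton] at hy
    have hyfrW2 : ∀ M : ℤ, ∃ i : ℤ, M ≤ i ∧ occursAt ET W2 y i := by
      intro M
      obtain ⟨i, hi, ho⟩ := hy.1 M
      exact ⟨i + c₁, by omega, slice_sub_occ (hBp₀ ▸ ho) oW2a (by omega)⟩
    have hypaW2 : ∀ M : ℤ, ∃ i : ℤ, i ≤ M ∧ occursAt ET W2 y i := by
      intro M
      obtain ⟨i, hi, ho⟩ := hy.2 (M - c₁)
      exact ⟨i + c₁, by omega, slice_sub_occ (hBp₀ ▸ ho) oW2a (by omega)⟩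
    obtain ⟨r, hr⟩ := hlift2 y hyfrW2 hypaW2
    have hσy : σ y = r := by rw [← hr, hσψ]
    have hmid : ∀ i : ℤ, occursAt ET Bp₀ y i → occursAt ES A₀ (φ r) (i + (L₀ : ℤ)) := by
      intro i hocc
      rw [hBp₀, ← hr] at hocc
      have hdec := gadget_decode hΨ huniq2 hper₀ hNL₀ oW2a oW2b (by omega) (by omega)
        2 (2 * L₀ + N₀) (by omega) r i hocc
      rw [hA₀]
      apply occ_transfer hΦ (occursAt_sliceWord_self (φ x₀) 0 N₀)
      intro k hk
      have hk' : k < N₀ := by simpa using hk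
      have hd := hdec (i + (L₀ : ℤ) + k) (by push_cast; omega) (by push_cast; omega)
      rw [hd, show i + (L₀ : ℤ) + (k : ℤ) - i = (k : ℤ) + 1 * (L₀ : ℤ) by ring, hper₀]
      simp
    have hφrK : φ r ∈ K := by
      rw [hKdef, mem_SWords_singleton]
      constructor
      · intro M
        obtain ⟨i, hi, ho⟩ := hy.1 M
        exact ⟨i + L₀, by omega, hmid i ho⟩
      · intro M
        obtain ⟨i, hi, ho⟩ := hy.2 (M - L₀)
        exact ⟨i + L₀, by omega, hmid i ho⟩
    constructor
    · show ψ (σ y) = y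
      rw [hσy, hr]
    · show φ (σ y) ∈ K
      rw [hσy]
      exact hφrK
  have himg : (fun x => ψ (ρ x)) '' K = K' := by
    apply Set.ext
    intro y
    constructor
    · rintro ⟨x, hx, rfl⟩
      have hx' := hKlift x hx
      constructor
      · show ψ (σ (ψ (ρ x))) = ψ (ρ x)
        rw [hσψ]
      · show φ (σ (ψ (ρ x))) ∈ K
        rw [hσψ, hx']
        exact hx
    · intro hy
      exact ⟨φ (σ y), hy.2, by show ψ (ρ (φ (σ y))) = y; rw [hρφ, hy.1]⟩
  refine ⟨K, K', fun x => ψ (ρ x), fun y => φ (σ y),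
    ⟨measurableSet_SWords _,
      (measurableSet_eqPoints (hψm.comp hσm) measurable_id).inter
        ((hφm.comp hσm) (measurableSet_SWords _)),
      ⟨{A₀}, ⟨A₀, rfl⟩, ?_, rfl⟩,
      ⟨{Bp₀}, ⟨Bp₀, rfl⟩, ?_, hVsub⟩,
      hψm.comp hρm, hφm.comp hσm, ?_, ?_, ?_, ?_, himg, ?_, ?_, ?_, ?_⟩, ?_⟩
  · intro w hw'
    rw [Set.mem_singleton_iff] at hw'
    exact hw' ▸ hA₀word
  · intro w hw'
    rw [Set.mem_singleton_iff] at hw'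
    exact hw' ▸ hBp₀word
  · -- MapsTo γ
    intro x hx
    rw [← himg]
    exact ⟨x, hx, rfl⟩
  · -- MapsTo δ
    intro y hy
    exact hy.2
  · -- δ ∘ γ = id on K
    intro x hx
    show φ (σ (ψ (ρ x))) = x
    rw [hσψ, hKlift x hx]
  · -- γ ∘ δ = id on K'
    intro y hy
    show ψ (ρ (φ (σ y))) = y
    rw [hρφ, hy.1]
  · -- γ commutes with the shift on K
    intro x hx
    have hx' := hKlift x hx
    show ψ (ρ (mShift ES x)) = mShift ET (ψ (ρ x))
    conv_lhs => rw [← hx']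
    rw [← oneblock_mShift hΦ, hρφ]
    exact oneblock_mShift hΨ (ρ x)
  · -- δ commutes with the shift on K'
    intro y hy
    show φ (σ (mShift ET y)) = mShift ES (φ (σ y))
    conv_lhs => rw [← hy.1]
    rw [← oneblock_mShift hΨ, hσψ]
    exact oneblock_mShift hΦ (σ y)
  · -- K is contained in the range of φ
    intro x hx
    exact ⟨ρ x, hKlift x hx⟩
  · -- γ ∘ φ = ψ
    intro r _
    show ψ (ρ (φ r)) = ψ r
    rw [hρφ]
  · -- the three properties of Γ
    intro p hp
    refine ⟨?_, ?_, ?_⟩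
    · intro 𝒲 hne hw f hf
      exact partA hirrR hirrS hirrT hΦ hΨ hlift1 hlift2 huniq2 hW1word hW2word
        σ hσψ K' hK'1 hp 𝒲 hne hw f hf
    · intro g hg
      exact partB hirrR hirrS hirrT hΦ hΨ hlift1 hlift2 huniq1 huniq2 hW1word hW2word
        ρ hρφ σ hσψ hp g hg
    · intro f f' _ _ hse
      exact partC hirrR hirrS hirrT hΦ hΨ hlift1 hlift2 huniq1 hW1word hW2word
        ρ hρφ σ hσψ f f' hse

end MarkovAI
end

section
/- Let (X, ℬ, μ) be a probability space, S : X → X a measure-preserving transformation, and h : X → ℝ a measurable function such that h − h∘S is integrable with respect to μ. Then ∫ (h − h∘S) dμ = 0. -/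
open MeasureTheory Set Function Filter
open scoped ENNReal NNReal Topology

namespace MarkovAI

variable {V V' : Type}

/-- for a measure preserving map `S` of a probability space
and a measurable `h` whose coboundary `h - h∘S` is integrable,
`∫ (h - h∘S) dμ = 0`. -/
theorem integral_coboundary_eq_zero
    {X : Type} [MeasurableSpace X] (μ : Measure X) [IsProbabilityMeasure μ]
    (S : X → X) (hS : MeasurePreserving S μ μ)
    (h : X → ℝ) (hmeas : Measurable h)
    (hint : Integrable (fun x => h x - h (S x)) μ) :
    ∫ x, (h x - h (S x)) ∂μ = 0 := by

  set T : ℕ → ℝ → ℝ := fun M a => max (min a M) (-(M : ℝ)) with hT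
  have hTlip : ∀ (M : ℕ) (a b : ℝ), |T M a - T M b| ≤ |a - b| := by
    intro M a b
    calc |T M a - T M b| ≤ |min a M - min b M| := abs_max_sub_max_le_abs _ _ _
    _ ≤ max |a - b| |(M:ℝ) - M| := abs_min_sub_min_le_max _ _ _ _
    _ = |a - b| := by simp
  have hTmeas : ∀ M : ℕ, Measurable fun x => T M (h x) := fun M =>
    (hmeas.min measurable_const).max measurable_const
  have hTbd : ∀ (M : ℕ) (a : ℝ), |T M a| ≤ (M : ℝ) := by
    intro M a
    rw [abs_le]
    constructor
    · exact le_max_right _ _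
    · exact max_le (min_le_right _ _) (by simp)
  have hTint : ∀ M : ℕ, Integrable (fun x => T M (h x)) μ := by
    intro M
    refine (integrable_const (M : ℝ)).mono' (hTmeas M).aestronglyMeasurable ?_
    exact Filter.Eventually.of_forall fun x => hTbd M (h x)
  have hTSint : ∀ M : ℕ, Integrable (fun x => T M (h (S x))) μ := by
    intro M
    refine (integrable_const (M : ℝ)).mono'
      ((hTmeas M).comp hS.measurable).aestronglyMeasurable ?_
    exact Filter.Eventually.of_forall fun x => hTbd M (h (S x))
  have hcomp : ∀ M : ℕ, ∫ x, T M (h (S x)) ∂μ = ∫ x, T M (h x) ∂μ := by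
    intro M
    conv_rhs => rw [← hS.map_eq]
    rw [integral_map hS.measurable.aemeasurable (hTmeas M).aestronglyMeasurable]
  set F : ℕ → X → ℝ := fun M x =>
    (h x - h (S x)) - (T M (h x) - T M (h (S x))) with hF
  have hFint : ∀ M : ℕ, Integrable (F M) μ := fun M =>
    hint.sub ((hTint M).sub (hTSint M))
  have hFeq : ∀ M : ℕ, ∫ x, F M x ∂μ = ∫ x, (h x - h (S x)) ∂μ := by
    intro M
    have h1 : ∫ x, F M x ∂μ =
        (∫ x, (h x - h (S x)) ∂μ) - ∫ x, (T M (h x) - T M (h (S x))) ∂μ :=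
      integral_sub hint ((hTint M).sub (hTSint M))
    rw [h1, integral_sub (hTint M) (hTSint M), hcomp M]
    ring
  have hbound : Integrable (fun x => 2 * |h x - h (S x)|) μ := hint.abs.const_mul 2
  have hdom : Tendsto (fun M : ℕ => ∫ x, F M x ∂μ) atTop (𝓝 (∫ x, (0:ℝ) ∂μ)) := by
    refine tendsto_integral_of_dominated_convergence (fun x => 2 * |h x - h (S x)|)
      (fun M => (hFint M).aestronglyMeasurable) hbound ?_ ?_
    · intro M
      refine Filter.Eventually.of_forall fun x => ?_
      have h1 := hTlip M (h x) (h (S x))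
      calc ‖F M x‖ = |(h x - h (S x)) - (T M (h x) - T M (h (S x)))| := rfl
      _ ≤ |h x - h (S x)| + |T M (h x) - T M (h (S x))| := abs_sub _ _
      _ ≤ |h x - h (S x)| + |h x - h (S x)| := by linarith
      _ = 2 * |h x - h (S x)| := by ring
    · refine Filter.Eventually.of_forall fun x => ?_
      have : (fun M => F M x) =ᶠ[atTop] fun _ => (0:ℝ) := by
        filter_upwards [Filter.eventually_ge_atTop ⌈max |h x| |h (S x)|⌉₊] with M hM
        have hM' : max |h x| |h (S x)| ≤ (M : ℝ) :=
          (Nat.le_ceil _).trans (Nat.cast_le.mpr hM)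
        have h1 : T M (h x) = h x := by
          have := (le_max_left |h x| |h (S x)|).trans hM'
          rw [abs_le] at this
          simp [hT, min_eq_left this.2, max_eq_left (neg_le.mp (neg_le.mpr this.1))]
        have h2 : T M (h (S x)) = h (S x) := by
          have := (le_max_right |h x| |h (S x)|).trans hM'
          rw [abs_le] at this
          simp [hT, min_eq_left this.2, max_eq_left (neg_le.mp (neg_le.mpr this.1))]
        simp [hF, h1, h2]
      exact Tendsto.congr' this.symm tendsto_const_nhds
  rw [integral_zero] at hdom
  have : Tendsto (fun _ : ℕ => ∫ x, (h x - h (S x)) ∂μ) atTop (𝓝 0) := by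
    refine hdom.congr fun M => hFeq M
  exact tendsto_nhds_unique tendsto_const_nhds this


end MarkovAI
end
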